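/- arXiv:2401.15642 — 9 statements merged into one kernel-verified Lean document; each statement's English description precedes it below -/
import Mathlib

section
/- For every natural number n with n = 3 or n ≥ 5, the conjugation action of the symmetric group Equiv.Perm (Fin n) on the set of transpositions (the conjugacy class of the transposition swapping 0 and 1) is primitive: it is transitive and admits no G-invariant equivalence relation other than equality and the full relation (equivalently, every block is trivial). -/
/-!
Two distinct transpositions are either adjacent (share a point), `(p q)` and `(p s)`, or
disjoint. If a conjugation-invariant equivalence relation relates disjoint `(a b)` and `(c d)`,
conjugating by `(b e)` for a fifth point `e` (there is one unless there are exactly four points)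
relates `(a e)` to `(c d)`, hence `(a b)` to `(a e)`. So a relation that is not equality relates
some adjacent pair; by 3-transitivity of the symmetric group it then relates all such
pairs, and any two transpositions are joined by a chain `(a b), (b c), (c d)` of them.
-/

/-- The conjugation action of a group `G` on a subset `C ⊆ G` (closed under
conjugation) is *primitive*: it is transitive, and every equivalence relation on `C`
that is invariant under conjugation by elements of `G` is either the equality
relation or the full relation. -/
def IsPrimitiveConjAction {G : Type*} [Group G] (C : Set G) : Prop :=
  (∀ x ∈ C, ∀ y ∈ C, ∃ g : G, g * x * g⁻¹ = y) ∧
  ∀ r : G → G → Prop,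
    (∀ x ∈ C, r x x) →
    (∀ x ∈ C, ∀ y ∈ C, r x y → r y x) →
    (∀ x ∈ C, ∀ y ∈ C, ∀ z ∈ C, r x y → r y z → r x z) →
    (∀ g : G, ∀ x ∈ C, ∀ y ∈ C, r x y → r (g * x * g⁻¹) (g * y * g⁻¹)) →
    (∀ x ∈ C, ∀ y ∈ C, (r x y ↔ x = y)) ∨ (∀ x ∈ C, ∀ y ∈ C, r x y)

structure IsConjCongruenceOn {G : Type*} [Group G] (C : Set G) (r : G → G → Prop) : Prop where
  refl : ∀ x ∈ C, r x x
  symm : ∀ x ∈ C, ∀ y ∈ C, r x y → r y x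
  trans : ∀ x ∈ C, ∀ y ∈ C, ∀ z ∈ C, r x y → r y z → r x z
  conj : ∀ g : G, ∀ x ∈ C, ∀ y ∈ C, r x y → r (g * x * g⁻¹) (g * y * g⁻¹)

open Equiv Equiv.Perm

section

variable {α : Type*}

theorem exists_perm_apply_eq_of_ne₃ {p q s u v w : α} (hpq : p ≠ q) (hps : p ≠ s) (hqs : q ≠ s)
    (huv : u ≠ v) (huw : u ≠ w) (hvw : v ≠ w) :
    ∃ g : Perm α, g p = u ∧ g q = v ∧ g s = w := by
  obtain ⟨g, hg⟩ := Perm.exists_extending_pair ![p, q, s] ![u, v, w]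
    (by simp [Function.Injective, Fin.forall_fin_succ, hpq, hps, hqs, hpq.symm, hps.symm, hqs.symm])
    (by simp [Function.Injective, Fin.forall_fin_succ, huv, huw, hvw, huv.symm, huw.symm, hvw.symm])
  exact ⟨g, hg 0, hg 1, hg 2⟩

theorem exists_ne_of_nat_card_ne_four (hα : Nat.card α ≠ 4) {a b c d : α} (hab : a ≠ b)
    (hac : a ≠ c) (had : a ≠ d) (hbc : b ≠ c) (hbd : b ≠ d) (hcd : c ≠ d) :
    ∃ e, e ≠ a ∧ e ≠ b ∧ e ≠ c ∧ e ≠ d := by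
  by_contra! h
  have huniv : (Set.univ : Set α) = {a, b, c, d} := by
    ext e
    simp only [Set.mem_univ, Set.mem_insert_iff, Set.mem_singleton_iff, true_iff]
    tauto
  apply hα
  rw [← Set.ncard_univ, huniv, Set.ncard_insert_of_notMem (by simp [hab, hac, had]),
    Set.ncard_insert_of_notMem (by simp [hbc, hbd]), Set.ncard_pair hcd]

variable [DecidableEq α]

theorem isConj_swap_iff_isSwap {a b : α} (hab : a ≠ b) {σ : Perm α} :
    IsConj (swap a b) σ ↔ σ.IsSwap := by
  constructor
  · intro h
    obtain ⟨c, rfl⟩ := isConj_iff.mp h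
    exact ⟨c a, c b, c.injective.ne hab, (swap_apply_apply c a b).symm⟩
  · rintro ⟨c, d, hcd, rfl⟩
    exact isConj_swap hab hcd

theorem Equiv.Perm.IsSwap.adjacent_or_disjoint {σ τ : Perm α} (hσ : σ.IsSwap) (hτ : τ.IsSwap)
    (hne : σ ≠ τ) :
    (∃ p q s, p ≠ q ∧ p ≠ s ∧ q ≠ s ∧ σ = swap p q ∧ τ = swap p s) ∨
    (∃ a b c d, a ≠ b ∧ a ≠ c ∧ a ≠ d ∧ b ≠ c ∧ b ≠ d ∧ c ≠ d ∧ σ = swap a b ∧ τ = swap c d) := by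
  obtain ⟨a, b, hab, rfl⟩ := hσ
  obtain ⟨c, d, hcd, rfl⟩ := hτ
  by_cases hac : a = c
  · subst hac
    exact .inl ⟨a, b, d, hab, hcd, fun h => hne (h ▸ rfl), rfl, rfl⟩
  by_cases had : a = d
  · subst had
    exact .inl ⟨a, b, c, hab, hcd.symm, fun h => hne (h ▸ swap_comm _ _), rfl, swap_comm _ _⟩
  by_cases hbc : b = c
  · subst hbc
    exact .inl ⟨b, a, d, hab.symm, hcd, had, swap_comm _ _, rfl⟩
  by_cases hbd : b = d
  · subst hbd
    exact .inl ⟨b, a, c, hab.symm, hcd.symm, hac, swap_comm _ _, swap_comm _ _⟩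
  exact .inr ⟨a, b, c, d, hab, hac, had, hbc, hbd, hcd, rfl, rfl⟩

namespace IsConjCongruenceOn

variable {r : Perm α → Perm α → Prop}

theorem rel_swap_apply (hr : IsConjCongruenceOn {σ : Perm α | σ.IsSwap} r) (g : Perm α)
    {a b c d : α} (hab : a ≠ b) (hcd : c ≠ d) (h : r (swap a b) (swap c d)) :
    r (swap (g a) (g b)) (swap (g c) (g d)) := by
  simpa only [swap_apply_apply] using
    hr.conj g _ (swap_isSwap_iff.mpr hab) _ (swap_isSwap_iff.mpr hcd) h

theorem rel_adjacent_of_rel_adjacent (hr : IsConjCongruenceOn {σ : Perm α | σ.IsSwap} r)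
    {p q s : α} (hpq : p ≠ q) (hps : p ≠ s) (hqs : q ≠ s) (h : r (swap p q) (swap p s))
    {u v w : α} (huv : u ≠ v) (huw : u ≠ w) (hvw : v ≠ w) : r (swap u v) (swap u w) := by
  obtain ⟨g, rfl, rfl, rfl⟩ := exists_perm_apply_eq_of_ne₃ hpq hps hqs huv huw hvw
  exact hr.rel_swap_apply g hpq hps h

theorem exists_rel_adjacent (hr : IsConjCongruenceOn {σ : Perm α | σ.IsSwap} r)
    (hα : Nat.card α ≠ 4) {σ τ : Perm α} (hσ : σ.IsSwap) (hτ : τ.IsSwap) (hne : σ ≠ τ)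
    (h : r σ τ) : ∃ p q s, p ≠ q ∧ p ≠ s ∧ q ≠ s ∧ r (swap p q) (swap p s) := by
  rcases hσ.adjacent_or_disjoint hτ hne with
    ⟨p, q, s, hpq, hps, hqs, rfl, rfl⟩ | ⟨a, b, c, d, hab, hac, had, hbc, hbd, hcd, rfl, rfl⟩
  · exact ⟨p, q, s, hpq, hps, hqs, h⟩
  obtain ⟨e, hea, heb, hec, hed⟩ := exists_ne_of_nat_card_ne_four hα hab hac had hbc hbd hcd
  have hae : r (swap a e) (swap c d) := by
    have h' := hr.rel_swap_apply (swap b e) hab hcd h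
    rwa [swap_apply_left, swap_apply_of_ne_of_ne hab hea.symm,
      swap_apply_of_ne_of_ne hbc.symm hec.symm, swap_apply_of_ne_of_ne hbd.symm hed.symm] at h'
  exact ⟨a, b, e, hab, hea.symm, heb.symm, hr.trans _ hσ _ hτ _ (swap_isSwap_iff.mpr hea.symm) h
    (hr.symm _ (swap_isSwap_iff.mpr hea.symm) _ hτ hae)⟩

theorem rel_of_forall_rel_adjacent (hr : IsConjCongruenceOn {σ : Perm α | σ.IsSwap} r)
    (hadj : ∀ p q s : α, p ≠ q → p ≠ s → q ≠ s → r (swap p q) (swap p s))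
    {σ τ : Perm α} (hσ : σ.IsSwap) (hτ : τ.IsSwap) : r σ τ := by
  obtain rfl | hne := eq_or_ne σ τ
  · exact hr.refl σ hσ
  rcases hσ.adjacent_or_disjoint hτ hne with
    ⟨p, q, s, hpq, hps, hqs, rfl, rfl⟩ | ⟨a, b, c, d, hab, hac, had, hbc, hbd, hcd, rfl, rfl⟩
  · exact hadj p q s hpq hps hqs
  have hab_bc : r (swap a b) (swap b c) := swap_comm a b ▸ hadj b a c hab.symm hbc hac
  have hbc_cd : r (swap b c) (swap c d) := swap_comm b c ▸ hadj c b d hbc.symm hcd hbd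
  exact hr.trans _ hσ _ (swap_isSwap_iff.mpr hbc) _ hτ hab_bc hbc_cd

end IsConjCongruenceOn

theorem isPrimitiveConjAction_setOf_isSwap (hα : Nat.card α ≠ 4) :
    IsPrimitiveConjAction {σ : Perm α | σ.IsSwap} := by
  refine ⟨fun σ hσ τ hτ => ?_, fun r hrefl hsymm htrans hconj => ?_⟩
  · obtain ⟨a, b, hab, rfl⟩ := hσ
    exact isConj_iff.mp ((isConj_swap_iff_isSwap hab).mpr hτ)
  have hr : IsConjCongruenceOn {σ : Perm α | σ.IsSwap} r := ⟨hrefl, hsymm, htrans, hconj⟩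
  by_cases h : ∀ σ : Perm α, σ.IsSwap → ∀ τ : Perm α, τ.IsSwap → r σ τ → σ = τ
  · exact .inl fun σ hσ τ hτ => ⟨h σ hσ τ hτ, fun hστ => hστ ▸ hrefl σ hσ⟩
  push Not at h
  obtain ⟨σ, hσ, τ, hτ, hστ, hne⟩ := h
  obtain ⟨p, q, s, hpq, hps, hqs, hpqs⟩ := hr.exists_rel_adjacent hα hσ hτ hne hστ
  exact .inr fun x hx y hy => hr.rel_of_forall_rel_adjacent
    (fun u v w => hr.rel_adjacent_of_rel_adjacent hpq hps hqs hpqs) hx hy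

end

/-- For `n = 3` or `n ≥ 5`, the conjugation action of `S_n` on the conjugacy class
of the transposition `(0 1)` (the set of all transpositions) is primitive. -/
theorem primitive_transpositions (n : ℕ) (hn : n = 3 ∨ 5 ≤ n) :
    IsPrimitiveConjAction
      {σ : Equiv.Perm (Fin n) |
        IsConj (Equiv.swap (⟨0, by omega⟩ : Fin n) (⟨1, by omega⟩ : Fin n)) σ} := by
  have h01 : (⟨0, by omega⟩ : Fin n) ≠ ⟨1, by omega⟩ := by simp [Fin.ext_iff]
  simp only [isConj_swap_iff_isSwap h01]
  exact isPrimitiveConjAction_setOf_isSwap (by rw [Nat.card_fin]; omega)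
end

section
/- For every natural number n with n ≥ 6 and n ≡ 2 (mod 4), the conjugation action of the symmetric group Equiv.Perm (Fin n) on the set of fixed-point-free involutions {σ : Perm (Fin n) | σ ≠ 1, σ² = 1, and σ x ≠ x for all x} (which is a single conjugacy class of S_n) is primitive: it is transitive and admits no G-invariant equivalence relation other than equality and the full relation. -/
open Equiv Equiv.Perm

section aux
variable {α : Type*} [DecidableEq α] [Fintype α]

private lemma inv_app {M : Perm α} (h : M ^ 2 = 1) (x : α) : M (M x) = x := by
  have := DFunLike.congr_fun h x
  simpa [pow_two, Perm.mul_apply] using this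

-- swap within an edge commutes with M
private lemma conj_swap_edge {M : Perm α} (h2 : M ^ 2 = 1) (c : α) :
    swap c (M c) * M = M * swap c (M c) := by
  ext x
  simp only [Perm.mul_apply]
  by_cases hc : x = c
  · subst hc
    rw [swap_apply_left, swap_apply_right, inv_app h2]
  · by_cases hmc : x = M c
    · subst hmc
      rw [swap_apply_right, inv_app h2, swap_apply_left]
    · rw [swap_apply_of_ne_of_ne hc hmc, swap_apply_of_ne_of_ne]
      · intro h; exact hmc (by rw [← h, inv_app h2])
      · intro h; exact hc (by rw [← inv_app h2 x, h, inv_app h2])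
end aux

section aux2
set_option linter.unusedSectionVars false
variable {α : Type*} [DecidableEq α] [Fintype α]

private lemma conj_swap_pair {M : Perm α} (h2 : M ^ 2 = 1) (hf : ∀ x, M x ≠ x)
    {u v : α} (huv : v ≠ u) (hmv : v ≠ M u) :
    (swap u v * swap (M u) (M v)) * M = M * (swap u v * swap (M u) (M v)) := by
  have hinj : Function.Injective M := M.injective
  have d1 : u ≠ v := huv.symm
  have d2 : u ≠ M u := (hf u).symm
  have d3 : u ≠ M v := fun h => hmv (by rw [h, inv_app h2])
  have d4 : v ≠ M u := hmv
  have d5 : v ≠ M v := (hf v).symm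
  have d6 : M u ≠ M v := fun h => d1 (hinj h)
  set π := swap u v * swap (M u) (M v) with hπ
  have pu : π u = v := by
    rw [hπ, Perm.mul_apply, swap_apply_of_ne_of_ne d2 d3, swap_apply_left]
  have pv : π v = u := by
    rw [hπ, Perm.mul_apply, swap_apply_of_ne_of_ne d4 d5, swap_apply_right]
  have pmu : π (M u) = M v := by
    rw [hπ, Perm.mul_apply, swap_apply_left, swap_apply_of_ne_of_ne d3.symm d5.symm]
  have pmv : π (M v) = M u := by
    rw [hπ, Perm.mul_apply, swap_apply_right, swap_apply_of_ne_of_ne d2.symm d4.symm]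
  have pother : ∀ y, y ≠ u → y ≠ v → y ≠ M u → y ≠ M v → π y = y := by
    intro y n1 n2 n3 n4
    rw [hπ, Perm.mul_apply, swap_apply_of_ne_of_ne n3 n4, swap_apply_of_ne_of_ne n1 n2]
  ext x
  rw [Perm.mul_apply, Perm.mul_apply]
  show π (M x) = M (π x)
  rcases eq_or_ne x u with rfl | h1
  · rw [pu, pmu]
  rcases eq_or_ne x v with rfl | h2'
  · rw [pv, pmv]
  rcases eq_or_ne x (M u) with rfl | h3
  · rw [inv_app h2, pu, pmu, inv_app h2]
  rcases eq_or_ne x (M v) with rfl | h4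
  · rw [inv_app h2, pv, pmv, inv_app h2]
  rw [pother x h1 h2' h3 h4, pother (M x)
    (fun h => h3 (by rw [← inv_app h2 x, h]))
    (fun h => h4 (by rw [← inv_app h2 x, h]))
    (fun h => h1 (hinj h))
    (fun h => h2' (hinj h))]
end aux2

section trans
variable {n : ℕ}

private lemma fpf_rep {σ : Perm (Fin n)} (h2 : σ ^ 2 = 1) (hf : ∀ x, σ x ≠ x) :
    σ.cycleType = Multiset.replicate σ.cycleType.card 2 ∧ σ.cycleType.card * 2 = n := by
  have hall : ∀ k ∈ σ.cycleType, k = 2 := by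
    intro k hk
    have h2le := Perm.two_le_of_mem_cycleType hk
    have hdvd : k ∣ 2 := by
      have h := Multiset.dvd_lcm hk
      rw [Perm.lcm_cycleType] at h
      exact h.trans (orderOf_dvd_of_pow_eq_one h2)
    have := Nat.le_of_dvd (by norm_num) hdvd
    omega
  have hrep : σ.cycleType = Multiset.replicate σ.cycleType.card 2 :=
    Multiset.eq_replicate_card.mpr hall
  refine ⟨hrep, ?_⟩
  have hsum : σ.cycleType.sum = n := by
    rw [Perm.sum_cycleType]
    have hu : σ.support = Finset.univ :=
      Finset.eq_univ_iff_forall.mpr (fun x => Perm.mem_support.mpr (hf x))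
    rw [hu, Finset.card_univ, Fintype.card_fin]
  rw [hrep, Multiset.sum_replicate, smul_eq_mul] at hsum
  exact hsum

private lemma fpf_conj {σ τ : Perm (Fin n)} (h2 : σ ^ 2 = 1) (hf : ∀ x, σ x ≠ x)
    (h2' : τ ^ 2 = 1) (hf' : ∀ x, τ x ≠ x) : ∃ g : Perm (Fin n), g * σ * g⁻¹ = τ := by
  obtain ⟨hrep1, hc1⟩ := fpf_rep h2 hf
  obtain ⟨hrep2, hc2⟩ := fpf_rep h2' hf'
  have hcards : σ.cycleType.card = τ.cycleType.card := by omega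
  have hConj : IsConj σ τ := Perm.isConj_iff_cycleType_eq.mpr (by rw [hrep1, hrep2, hcards])
  obtain ⟨c, hc⟩ := hConj
  exact ⟨c, mul_inv_eq_iff_eq_mul.mpr hc.eq⟩

end trans

section transport
variable {n : ℕ}

private lemma move1 {M : Perm (Fin n)} (hM2 : M ^ 2 = 1) (hMf : ∀ p, M p ≠ p)
    (a' c : Fin n) : ∃ s : Perm (Fin n), s * M = M * s ∧ s a' = c := by
  rcases eq_or_ne a' c with rfl | h1
  · exact ⟨1, by simp, rfl⟩
  rcases eq_or_ne a' (M c) with rfl | h2'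
  · exact ⟨swap c (M c), conj_swap_edge hM2 c, swap_apply_right c (M c)⟩
  · refine ⟨swap a' c * swap (M a') (M c), conj_swap_pair hM2 hMf h1.symm ?_, ?_⟩
    · exact fun h => h2' (by rw [h, inv_app hM2])
    · rw [Perm.mul_apply, swap_apply_of_ne_of_ne (hMf a').symm h2', swap_apply_left]

private lemma move2 {M : Perm (Fin n)} (hM2 : M ^ 2 = 1) (hMf : ∀ p, M p ≠ p)
    {b'' c d : Fin n} (hbc : b'' ≠ c) (hbMc : b'' ≠ M c) (hdc : d ≠ c) (hdMc : d ≠ M c) :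
    ∃ s : Perm (Fin n), s * M = M * s ∧ s b'' = d ∧ s c = c := by
  rcases eq_or_ne b'' d with rfl | h1
  · exact ⟨1, by simp, rfl, rfl⟩
  rcases eq_or_ne b'' (M d) with rfl | h2'
  · refine ⟨swap d (M d), conj_swap_edge hM2 d, swap_apply_right d (M d), ?_⟩
    exact swap_apply_of_ne_of_ne (fun h => hdc h.symm)
      (fun h => hdMc (by rw [h, inv_app hM2]))
  · refine ⟨swap b'' d * swap (M b'') (M d),
      conj_swap_pair hM2 hMf h1.symm (fun h => h2' (by rw [h, inv_app hM2])),
      ?_, ?_⟩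
    · rw [Perm.mul_apply, swap_apply_of_ne_of_ne (hMf b'').symm h2', swap_apply_left]
    · have n1 : c ≠ M b'' := fun h => hbMc (by rw [h, inv_app hM2])
      have n2 : c ≠ M d := fun h => hdMc (by rw [h, inv_app hM2])
      rw [Perm.mul_apply, swap_apply_of_ne_of_ne n1 n2,
        swap_apply_of_ne_of_ne (fun h => hbc h.symm) (fun h => hdc h.symm)]

private lemma transport {x M : Perm (Fin n)}
    (hx2 : x ^ 2 = 1) (hxf : ∀ p, x p ≠ p) (hM2 : M ^ 2 = 1) (hMf : ∀ p, M p ≠ p)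
    {a b c d : Fin n} (hab : b ≠ a) (hbxa : b ≠ x a) (hdc : d ≠ c) (hdMc : d ≠ M c) :
    ∃ h : Perm (Fin n), h * x * h⁻¹ = M ∧ h a = c ∧ h b = d := by
  obtain ⟨h1, hh1⟩ := fpf_conj hx2 hxf hM2 hMf
  have hMa' : M (h1 a) = h1 (x a) := by
    rw [← hh1]; simp [Perm.mul_apply]
  obtain ⟨s1, hs1c, hs1a⟩ := move1 hM2 hMf (h1 a) c
  have hs1pt : ∀ y, s1 (M y) = M (s1 y) := fun y => by
    have := DFunLike.congr_fun hs1c y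
    simpa [Perm.mul_apply] using this
  have hbc : s1 (h1 b) ≠ c := by
    rw [← hs1a]; exact fun h => hab (h1.injective (s1.injective h))
  have hbMc : s1 (h1 b) ≠ M c := by
    rw [← hs1a, ← hs1pt, hMa']
    exact fun h => hbxa (h1.injective (s1.injective h))
  obtain ⟨s2, hs2c, hs2b, hs2fix⟩ := move2 hM2 hMf hbc hbMc hdc hdMc
  refine ⟨s2 * s1 * h1, ?_, ?_, ?_⟩
  · have e1 : s1 * M * s1⁻¹ = M := mul_inv_eq_iff_eq_mul.mpr hs1c
    have e2 : s2 * M * s2⁻¹ = M := mul_inv_eq_iff_eq_mul.mpr hs2c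
    calc s2 * s1 * h1 * x * (s2 * s1 * h1)⁻¹
        = s2 * (s1 * (h1 * x * h1⁻¹) * s1⁻¹) * s2⁻¹ := by group
      _ = M := by rw [hh1, e1, e2]
  · show s2 (s1 (h1 a)) = c
    rw [hs1a, hs2fix]
  · exact hs2b

end transport

/-- For `n ≥ 6` with `n ≡ 2 (mod 4)`, the conjugation action of `S_n` on the set
of fixed-point-free involutions (a single conjugacy class of `S_n`) is primitive. -/
theorem primitive_fpf_involutions_symm (n : ℕ) (hn : 6 ≤ n) (hmod : n % 4 = 2) :
    IsPrimitiveConjAction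
      {σ : Equiv.Perm (Fin n) | σ ≠ 1 ∧ σ ^ 2 = 1 ∧ ∀ x : Fin n, σ x ≠ x} := by
  set C : Set (Perm (Fin n)) :=
    {σ : Equiv.Perm (Fin n) | σ ≠ 1 ∧ σ ^ 2 = 1 ∧ ∀ x : Fin n, σ x ≠ x} with hC
  have hmem : ∀ (g M : Perm (Fin n)), M ∈ C → g * M * g⁻¹ ∈ C := by
    intro g M hM
    refine ⟨?_, ?_, ?_⟩
    · intro h
      apply hM.1
      have : g⁻¹ * (g * M * g⁻¹) * g = g⁻¹ * 1 * g := by rw [h]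
      simpa [mul_assoc] using this
    · have : (g * M * g⁻¹) ^ 2 = g * M ^ 2 * g⁻¹ := by
        rw [sq, sq]; group
      rw [this, hM.2.1]; group
    · intro p h
      apply hM.2.2 (g⁻¹ p)
      have : g⁻¹ ((g * M * g⁻¹) p) = g⁻¹ p := by rw [h]
      simpa [Perm.mul_apply] using this
  constructor
  · intro x hx y hy
    exact fpf_conj hx.2.1 hx.2.2 hy.2.1 hy.2.2
  · intro r hrefl hsymm htrans hinv
    by_cases htriv : ∀ x ∈ C, ∀ y ∈ C, r x y → x = y
    · left
      exact fun x hx y hy => ⟨htriv x hx y hy, fun h => h ▸ hrefl x hx⟩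
    · right
      push_neg at htriv
      obtain ⟨x, hx, y, hy, hrxy, hxy⟩ := htriv
      have hex : ∃ a : Fin n, x a ≠ y a := by
        by_contra h
        push_neg at h
        exact hxy (Equiv.ext h)
      obtain ⟨a, ha⟩ := hex
      -- conjugating by the swap within the y-edge {a, y a} fixes y and moves x
      have hyfix : swap a (y a) * y * (swap a (y a))⁻¹ = y :=
        mul_inv_eq_iff_eq_mul.mpr (conj_swap_edge hy.2.1 a)
      have h1 : r (swap a (y a) * x * (swap a (y a))⁻¹) y := by
        have := hinv (swap a (y a)) x hx y hy hrxy
        rwa [hyfix] at this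
      have hx' : (swap a (y a) * x * (swap a (y a))⁻¹) ∈ C := hmem _ _ hx
      have hrx : r x (swap a (y a) * x * (swap a (y a))⁻¹) :=
        htrans x hx y hy _ hx' hrxy (hsymm _ hx' y hy h1)
      have hba : (y a) ≠ a := hy.2.2 a
      have hbxa : (y a) ≠ x a := ha.symm
      -- Lemma L : r M (swap c d * M * (swap c d)⁻¹) for every M ∈ C and admissible c d
      have lemL : ∀ M, M ∈ C → ∀ c d : Fin n, d ≠ c → d ≠ M c →
          r M (swap c d * M * (swap c d)⁻¹) := by
        intro M hM c d hdc hdMc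
        obtain ⟨h, hhx, hhac, hhbd⟩ :=
          transport hx.2.1 hx.2.2 hM.2.1 hM.2.2 hba hbxa hdc hdMc
        have h2 := hinv h x hx _ hx' hrx
        have key : h * (swap a (y a) * x * (swap a (y a))⁻¹) * h⁻¹
            = swap c d * M * (swap c d)⁻¹ := by
          calc h * (swap a (y a) * x * (swap a (y a))⁻¹) * h⁻¹
              = (h * swap a (y a) * h⁻¹) * (h * x * h⁻¹) * (h * swap a (y a) * h⁻¹)⁻¹ := by
                group
            _ = swap c d * M * (swap c d)⁻¹ := by
                rw [← Equiv.swap_apply_apply, hhac, hhbd, hhx]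
        rwa [hhx, key] at h2
      -- propagate along products of swaps
      have main : ∀ f : Perm (Fin n), ∀ M, M ∈ C → r M (f * M * f⁻¹) := by
        intro f
        refine Perm.swap_induction_on f ?_ ?_
        · intro M hM
          simpa using hrefl M hM
        · intro f c d hcd ih
          intro M hM
          have hM' : f * M * f⁻¹ ∈ C := hmem f M hM
          have ihr := ih M hM
          have heq : swap c d * f * M * (swap c d * f)⁻¹
              = swap c d * (f * M * f⁻¹) * (swap c d)⁻¹ := by group
          rw [heq]
          by_cases hfix : d = (f * M * f⁻¹) c
          · have hcomm : swap c d * (f * M * f⁻¹) * (swap c d)⁻¹ = f * M * f⁻¹ := by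
              rw [hfix]
              exact mul_inv_eq_iff_eq_mul.mpr (conj_swap_edge hM'.2.1 c)
            rw [hcomm]
            exact ihr
          · have hstep := lemL (f * M * f⁻¹) hM' c d (Ne.symm hcd) hfix
            exact htrans M hM _ hM' _ (hmem _ _ hM') ihr hstep
      intro M hM N hN
      obtain ⟨g, hg⟩ := fpf_conj hM.2.1 hM.2.2 hN.2.1 hN.2.2
      have := main g M hM
      rwa [hg] at this
end

section
/- For every natural number n with n ≥ 12 and 4 ∣ n, the conjugation action of the alternating group alternatingGroup (Fin n) on the set of fixed-point-free involutions of Fin n (all of which are even permutations, and which form a single conjugacy class of the alternating group) is primitive: it is transitive and admits no invariant equivalence relation other than equality and the full relation. -/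
/-!
View a fixed-point-free involution `u` as a perfect matching, and call `w` a rewiring of `u` if
`w = σ u σ` for a transposition `σ = (b c)` with `c ∉ {b, u b}`: the pairs `{b, u b}`, `{c, u c}`
are replaced by `{c, u b}`, `{b, u c}`.

Let `r` be an `A_n`-invariant equivalence relation with `r x y` for some `x ≠ y`. For
`g = (a, x a) (e, x e)`, which is even and centralises `x`, we get `r y (g y g⁻¹)`. If
`x a ≠ y a` and `x e = y e`, the factor `(e, x e)` also centralises `y`, so `g y g⁻¹` is a
rewiring of `y`. If `x` and `y` disagree everywhere, a suitable such `g` gives `g y g⁻¹ ≠ y`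
differing from `y` on at most eight points; with more than eight points the first case applies
to `y` and `g y g⁻¹`. Hence `r` relates some involution to one of its rewirings. As `A_n` acts
transitively on pairs (involution, rewiring), `r` relates all such pairs, and any two involutions
are joined by a chain of rewirings, each step removing a point where the two disagree.
-/

open Equiv Finset

/-- The conjugation action of a subgroup `H ≤ G` on a subset `C ⊆ G` (closed under
conjugation by elements of `H`) is *primitive*: it is transitive, and every
equivalence relation on `C` invariant under conjugation by elements of `H` is either
the equality relation or the full relation. -/
def IsPrimitiveConjActionOf {G : Type*} [Group G] (H : Subgroup G) (C : Set G) : Prop :=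
  (∀ x ∈ C, ∀ y ∈ C, ∃ g ∈ H, g * x * g⁻¹ = y) ∧
  ∀ r : G → G → Prop,
    (∀ x ∈ C, r x x) →
    (∀ x ∈ C, ∀ y ∈ C, r x y → r y x) →
    (∀ x ∈ C, ∀ y ∈ C, ∀ z ∈ C, r x y → r y z → r x z) →
    (∀ g ∈ H, ∀ x ∈ C, ∀ y ∈ C, r x y → r (g * x * g⁻¹) (g * y * g⁻¹)) →
    (∀ x ∈ C, ∀ y ∈ C, (r x y ↔ x = y)) ∨ (∀ x ∈ C, ∀ y ∈ C, r x y)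

structure IsConjInvariantEquivOn {G : Type*} [Group G] (H : Subgroup G) (C : Set G)
    (r : G → G → Prop) : Prop where
  refl : ∀ x ∈ C, r x x
  symm : ∀ x ∈ C, ∀ y ∈ C, r x y → r y x
  trans : ∀ x ∈ C, ∀ y ∈ C, ∀ z ∈ C, r x y → r y z → r x z
  conj : ∀ g ∈ H, ∀ x ∈ C, ∀ y ∈ C, r x y → r (g * x * g⁻¹) (g * y * g⁻¹)

theorem IsConjInvariantEquivOn.rel_conj_of_commute {G : Type*} [Group G] {H : Subgroup G}
    {C : Set G} {r : G → G → Prop} (hr : IsConjInvariantEquivOn H C r) {g x y : G} (hg : g ∈ H)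
    (hgx : Commute g x) (hx : x ∈ C) (hy : y ∈ C) (hgy : g * y * g⁻¹ ∈ C) (hxy : r x y) :
    r y (g * y * g⁻¹) := by
  have h := hr.conj g hg x hx y hy hxy
  rw [hgx.mul_inv_cancel] at h
  exact hr.trans y hy x hx _ hgy (hr.symm x hx y hy hxy) h

theorem List.exists_notMem_of_length_lt_card {α : Type*} [Fintype α] (l : List α)
    (h : l.length < Fintype.card α) : ∃ z, z ∉ l :=
  Cardinal.exists_notMem_of_length_lt l (by rw [Cardinal.mk_fintype]; exact_mod_cast h)

namespace Equiv.Perm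

variable {α : Type*}

theorem commute_swap_apply_of_involutive [DecidableEq α] {u : Perm α}
    (hu : Function.Involutive u) (a : α) : Commute (swap a (u a)) u := by
  have h : u * swap a (u a) * u⁻¹ = swap a (u a) := by
    rw [← swap_apply_apply, hu a, swap_comm]
  exact (show Commute u _ from mul_inv_eq_iff_eq_mul.mp h).symm

theorem swap_mul_swap_mem_alternatingGroup [DecidableEq α] [Fintype α] {a b c d : α}
    (hab : a ≠ b) (hcd : c ≠ d) : swap a b * swap c d ∈ alternatingGroup α := by
  rw [mem_alternatingGroup, sign_mul, sign_swap hab, sign_swap hcd]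
  rfl

structure IsFixedPointFreeInvolution (u : Perm α) : Prop where
  sq_eq_one : u ^ 2 = 1
  apply_ne : ∀ a, u a ≠ a

theorem isFixedPointFreeInvolution_iff [Nonempty α] {u : Perm α} :
    IsFixedPointFreeInvolution u ↔ u ≠ 1 ∧ u ^ 2 = 1 ∧ ∀ a, u a ≠ a :=
  ⟨fun hu => ⟨fun h => hu.apply_ne (Classical.arbitrary α) (by rw [h, one_apply]),
      hu.sq_eq_one, hu.apply_ne⟩,
    fun ⟨_, h2, hf⟩ => ⟨h2, hf⟩⟩

def IsRewiring [DecidableEq α] (u w : Perm α) : Prop :=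
  ∃ b c, c ≠ b ∧ c ≠ u b ∧ w = swap b c * u * swap b c

namespace IsFixedPointFreeInvolution

variable {u v x y : Perm α}

theorem involutive (hu : IsFixedPointFreeInvolution u) : Function.Involutive u := fun a => by
  rw [← mul_apply, ← sq, hu.sq_eq_one, one_apply]

theorem conj (hu : IsFixedPointFreeInvolution u) (g : Perm α) :
    IsFixedPointFreeInvolution (g * u * g⁻¹) where
  sq_eq_one := by rw [conj_pow, hu.sq_eq_one, mul_one, mul_inv_cancel]
  apply_ne a h := hu.apply_ne (g⁻¹ a) (by rwa [mul_apply, mul_apply, ← eq_inv_iff_eq] at h)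

theorem cycleType_eq [Fintype α] [DecidableEq α] (hu : IsFixedPointFreeInvolution u) :
    u.cycleType = Multiset.replicate (Fintype.card α / 2) 2 := by
  have h := cycleType_of_pow_prime_eq_one hu.sq_eq_one
  have hsum : u.cycleType.sum = Fintype.card α := by
    rw [sum_cycleType, eq_univ_of_forall fun a => mem_support.2 (hu.apply_ne a), card_univ]
  rw [h, Multiset.sum_replicate, smul_eq_mul] at hsum
  rw [h]
  congr 1
  omega

theorem isConj [Fintype α] [DecidableEq α] (hu : IsFixedPointFreeInvolution u)
    (hv : IsFixedPointFreeInvolution v) : IsConj u v :=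
  isConj_iff_cycleType_eq.2 (by rw [hu.cycleType_eq, hv.cycleType_eq])

section DecidableEq

variable [DecidableEq α]

theorem commute_swap (hu : IsFixedPointFreeInvolution u) (a : α) : Commute (swap a (u a)) u :=
  commute_swap_apply_of_involutive hu.involutive a

theorem exists_commute_apply_eq (hu : IsFixedPointFreeInvolution u) (p q : α) :
    ∃ s : Perm α, Commute s u ∧ s p = q ∧
      ∀ z, z ≠ p → z ≠ u p → z ≠ q → z ≠ u q → s z = z := by
  by_cases hq : q = u p
  · exact ⟨swap p (u p), hu.commute_swap p, by rw [hq, swap_apply_left],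
      fun z h1 h2 _ _ => swap_apply_of_ne_of_ne h1 h2⟩
  have hpq : p ≠ u q := fun h => hq (hu.involutive.eq_iff.mpr h).symm
  refine ⟨swap p q * swap (u p) (u q), ?_, ?_, fun z h1 h2 h3 h4 => ?_⟩
  · have hcomm : Commute (swap p q) (swap (u p) (u q)) := by
      rcases eq_or_ne p q with rfl | hpq'
      · rw [swap_self]
        exact Commute.one_left _
      · refine (disjoint_swap_swap ?_).commute
        simp only [List.nodup_cons, List.mem_cons, List.not_mem_nil, or_false, not_or,
          List.nodup_nil, not_false_eq_true, and_true]
        exact ⟨⟨hpq', (hu.apply_ne p).symm, hpq⟩, ⟨hq, (hu.apply_ne q).symm⟩,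
          hu.involutive.injective.ne hpq'⟩
    have h : u * (swap p q * swap (u p) (u q)) * u⁻¹ = swap p q * swap (u p) (u q) := by
      rw [show u * (swap p q * swap (u p) (u q)) * u⁻¹
          = u * swap p q * u⁻¹ * (u * swap (u p) (u q) * u⁻¹) by group,
        ← swap_apply_apply, ← swap_apply_apply, hu.involutive p, hu.involutive q, hcomm.eq]
    exact (show Commute u _ from mul_inv_eq_iff_eq_mul.mp h).symm
  · rw [mul_apply, swap_apply_of_ne_of_ne (hu.apply_ne p).symm hpq, swap_apply_left]
  · rw [mul_apply, swap_apply_of_ne_of_ne h2 h4, swap_apply_of_ne_of_ne h1 h3]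

theorem exists_commute_apply_eq_apply_eq (hu : IsFixedPointFreeInvolution u) {b c b' c' : α}
    (hc : c ≠ b) (hcu : c ≠ u b) (hc' : c' ≠ b') (hcu' : c' ≠ u b') :
    ∃ s : Perm α, Commute s u ∧ s b = b' ∧ s c = c' := by
  obtain ⟨s₁, hs₁, hs₁b, -⟩ := hu.exists_commute_apply_eq b b'
  obtain ⟨s₂, hs₂, hs₂c, hs₂fix⟩ := hu.exists_commute_apply_eq (s₁ c) c'
  refine ⟨s₂ * s₁, hs₂.mul_left hs₁, ?_, by rw [mul_apply, hs₂c]⟩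
  rw [mul_apply, hs₁b]
  have hus₁c : u (s₁ c) = s₁ (u c) := congr($(hs₁.eq.symm) c)
  refine hs₂fix b' ?_ ?_ hc'.symm ?_
  · rw [← hs₁b]
    exact s₁.injective.ne hc.symm
  · rw [hus₁c, ← hs₁b]
    exact s₁.injective.ne fun h => hcu (hu.involutive.eq_iff.mp h.symm)
  · exact fun h => hcu' (hu.involutive.eq_iff.mp h.symm)

theorem exists_conj_eq_apply_eq_apply_eq [Fintype α] {u' : Perm α}
    (hu : IsFixedPointFreeInvolution u) (hu' : IsFixedPointFreeInvolution u') {b c b' c' : α}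
    (hc : c ≠ b) (hcu : c ≠ u b) (hc' : c' ≠ b') (hcu' : c' ≠ u' b') :
    ∃ k : Perm α, k * u * k⁻¹ = u' ∧ k b = b' ∧ k c = c' := by
  obtain ⟨k, rfl⟩ := isConj_iff.mp (hu.isConj hu')
  have hkb : (k * u * k⁻¹) (k b) = k (u b) := by
    simp only [coe_mul, coe_inv, Function.comp_apply, symm_apply_apply]
  obtain ⟨s, hs, hsb, hsc⟩ := hu'.exists_commute_apply_eq_apply_eq (k.injective.ne hc)
    (by rw [hkb]; exact k.injective.ne hcu) hc' hcu'
  refine ⟨s * k, ?_, hsb, hsc⟩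
  rw [show s * k * u * (s * k)⁻¹ = s * (k * u * k⁻¹) * s⁻¹ by group, hs.mul_inv_cancel]

theorem exists_mem_alternatingGroup_of_conj_eq [Fintype α] (hv : IsFixedPointFreeInvolution v)
    {k : Perm α} (hk : k * u * k⁻¹ = v) (e : α) :
    ∃ h ∈ alternatingGroup α, h * u * h⁻¹ = v ∧ ∀ z, k z ≠ e → k z ≠ v e → h z = k z := by
  rcases Int.units_eq_one_or (sign k) with hs | hs
  · exact ⟨k, hs, hk, fun _ _ _ => rfl⟩
  refine ⟨swap e (v e) * k, ?_, ?_, fun z h1 h2 => swap_apply_of_ne_of_ne h1 h2⟩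
  · rw [mem_alternatingGroup, sign_mul, hs, sign_swap (hv.apply_ne e).symm]
    rfl
  · rw [show swap e (v e) * k * u * (swap e (v e) * k)⁻¹
        = swap e (v e) * (k * u * k⁻¹) * (swap e (v e))⁻¹ by group,
      hk, (hv.commute_swap e).mul_inv_cancel]

theorem exists_mem_alternatingGroup_conj_eq [Fintype α] [Nonempty α]
    (hu : IsFixedPointFreeInvolution u) (hv : IsFixedPointFreeInvolution v) :
    ∃ g ∈ alternatingGroup α, g * u * g⁻¹ = v := by
  obtain ⟨k, hk⟩ := isConj_iff.mp (hu.isConj hv)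
  obtain ⟨g, hg, hgu, -⟩ := hv.exists_mem_alternatingGroup_of_conj_eq hk (Classical.arbitrary α)
  exact ⟨g, hg, hgu⟩

theorem exists_mem_alternatingGroup_conj_eq_conj_eq_of_isRewiring [Fintype α] {w u' w' : Perm α}
    (hα : 4 < Fintype.card α) (hu : IsFixedPointFreeInvolution u)
    (hu' : IsFixedPointFreeInvolution u') (huw : IsRewiring u w) (huw' : IsRewiring u' w') :
    ∃ h ∈ alternatingGroup α, h * u * h⁻¹ = u' ∧ h * w * h⁻¹ = w' := by
  obtain ⟨b, c, hc, hcu, rfl⟩ := huw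
  obtain ⟨b', c', hc', hcu', rfl⟩ := huw'
  obtain ⟨k, hk, hkb, hkc⟩ := hu.exists_conj_eq_apply_eq_apply_eq hu' hc hcu hc' hcu'
  obtain ⟨e, he⟩ := [b', c', u' b', u' c'].exists_notMem_of_length_lt_card hα
  simp only [List.mem_cons, List.not_mem_nil, or_false, not_or] at he
  obtain ⟨heb, hec, heub, heuc⟩ := he
  obtain ⟨g, hg, hgu, hgk⟩ := hu'.exists_mem_alternatingGroup_of_conj_eq hk e
  have hgb : g b = b' := by
    rw [hgk b (hkb ▸ Ne.symm heb) (hkb ▸ fun h => heub (hu'.involutive.eq_iff.mp h.symm)), hkb]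
  have hgc : g c = c' := by
    rw [hgk c (hkc ▸ Ne.symm hec) (hkc ▸ fun h => heuc (hu'.involutive.eq_iff.mp h.symm)), hkc]
  refine ⟨g, hg, hgu, ?_⟩
  rw [show g * (swap b c * u * swap b c) * g⁻¹
      = g * swap b c * g⁻¹ * (g * u * g⁻¹) * (g * swap b c * g⁻¹) by group,
    ← swap_apply_apply, hgb, hgc, hgu]

theorem exists_isRewiring_conj_of_apply_eq [Fintype α] (hx : IsFixedPointFreeInvolution x)
    (hy : IsFixedPointFreeInvolution y) {a e : α} (ha : x a ≠ y a) (he : x e = y e) :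
    ∃ g ∈ alternatingGroup α, Commute g x ∧ IsRewiring y (g * y * g⁻¹) := by
  refine ⟨swap a (x a) * swap e (x e),
    swap_mul_swap_mem_alternatingGroup (hx.apply_ne a).symm (hx.apply_ne e).symm,
    (hx.commute_swap a).mul_left (hx.commute_swap e), a, x a, hx.apply_ne a, ha, ?_⟩
  have hτ : Commute (swap e (x e)) y := he ▸ hy.commute_swap e
  rw [show swap a (x a) * swap e (x e) * y * (swap a (x a) * swap e (x e))⁻¹
      = swap a (x a) * (swap e (x e) * y * (swap e (x e))⁻¹) * (swap a (x a))⁻¹ by group,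
    hτ.mul_inv_cancel, swap_inv]

theorem exists_conj_ne_and_apply_eq [Fintype α] (hα : 8 < Fintype.card α)
    (hx : IsFixedPointFreeInvolution x) (hy : IsFixedPointFreeInvolution y)
    (hxy : ∀ p, x p ≠ y p) :
    ∃ g ∈ alternatingGroup α, Commute g x ∧ g * y * g⁻¹ ≠ y ∧ ∃ e, y e = (g * y * g⁻¹) e := by
  obtain ⟨a⟩ : Nonempty α := Fintype.card_pos_iff.mp (by omega)
  obtain ⟨q, hq⟩ := [a, x a, y a, x (y a)].exists_notMem_of_length_lt_card
    (by simp only [List.length_cons, List.length_nil]; omega)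
  simp only [List.mem_cons, List.not_mem_nil, or_false, not_or] at hq
  obtain ⟨hqa, hqxa, hqya, hqxya⟩ := hq
  set g := swap a (x a) * swap q (x q) with hg
  have hfix : ∀ p, p ≠ a → p ≠ x a → p ≠ q → p ≠ x q → g p = p := fun p h1 h2 h3 h4 => by
    rw [hg, mul_apply, swap_apply_of_ne_of_ne h3 h4, swap_apply_of_ne_of_ne h1 h2]
  have hxq : ∀ p, p ≠ x q ↔ q ≠ x p := fun p => (eq_comm.trans hx.involutive.eq_iff).not
  refine ⟨g, swap_mul_swap_mem_alternatingGroup (hx.apply_ne a).symm (hx.apply_ne q).symm,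
    (hx.commute_swap a).mul_left (hx.commute_swap q), fun h => ?_, ?_⟩
  · have hga : g a = x a := by
      rw [hg, mul_apply, swap_apply_of_ne_of_ne (Ne.symm hqa) ((hxq a).2 hqxa),
        swap_apply_left]
    have hgya : g (y a) = y a :=
      hfix (y a) (hy.apply_ne a) (hxy a).symm (Ne.symm hqya) ((hxq (y a)).2 hqxya)
    have hgy : g (y a) = y (g a) := congr($(mul_inv_eq_iff_eq_mul.mp h) a)
    rw [hgya, hga] at hgy
    exact hx.apply_ne a (hy.involutive.injective hgy).symm
  · obtain ⟨e, he⟩ :=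
      [a, x a, q, x q, y a, y (x a), y q, y (x q)].exists_notMem_of_length_lt_card hα
    simp only [List.mem_cons, List.not_mem_nil, or_false, not_or] at he
    obtain ⟨hea, hexa, heq, hexq, heya, heyxa, heyq, heyxq⟩ := he
    have hye : ∀ {p}, e ≠ y p → y e ≠ p := fun h h' => h (hy.involutive.eq_iff.mp h')
    have hge : g⁻¹ e = e := inv_eq_iff_eq.mpr (hfix e hea hexa heq hexq).symm
    refine ⟨e, ?_⟩
    rw [mul_apply, mul_apply, hge,
      hfix (y e) (hye heya) (hye heyxa) (hye heyq) (hye heyxq)]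

end DecidableEq

end IsFixedPointFreeInvolution

theorem IsRewiring.isFixedPointFreeInvolution [DecidableEq α] {u w : Perm α}
    (huw : IsRewiring u w) (hu : IsFixedPointFreeInvolution u) : IsFixedPointFreeInvolution w := by
  obtain ⟨b, c, -, -, rfl⟩ := huw
  simpa only [swap_inv] using hu.conj (swap b c)

theorem filter_apply_ne_swap_conj_ssubset [Fintype α] [DecidableEq α] {u v : Perm α}
    (hu : IsFixedPointFreeInvolution u) (hv : IsFixedPointFreeInvolution v) {a : α}
    (ha : u a ≠ v a) :
    ({p | (swap (u a) (v a) * u * swap (u a) (v a)) p ≠ v p} : Finset α) ⊂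
      ({p | u p ≠ v p} : Finset α) := by
  refine (ssubset_iff_of_subset fun p => ?_).2 ⟨a, ?_, ?_⟩
  · simp only [mem_filter, mem_univ, true_and]
    contrapose!
    intro h
    have hpb : p ≠ u a := by
      rintro rfl
      exact ha (hv.involutive.eq_iff.mp (by rw [← h, hu.involutive]))
    have hpc : p ≠ v a := by
      rintro rfl
      exact ha (hu.involutive.eq_iff.mp (by rw [h, hv.involutive])).symm
    have hupb : u p ≠ u a := fun h' => ha (u.injective h' ▸ h)
    have hupc : u p ≠ v a := fun h' => ha (v.injective (h ▸ h') ▸ h)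
    rw [mul_apply, mul_apply, swap_apply_of_ne_of_ne hpb hpc, swap_apply_of_ne_of_ne hupb hupc, h]
  · simpa using ha
  · simp only [mem_filter, mem_univ, true_and, not_not]
    rw [mul_apply, mul_apply, swap_apply_of_ne_of_ne (hu.apply_ne a).symm (hv.apply_ne a).symm,
      swap_apply_left]

end Equiv.Perm

namespace IsConjInvariantEquivOn

open Equiv.Perm

variable {α : Type*} [Fintype α] [DecidableEq α] {r : Perm α → Perm α → Prop}

theorem exists_rel_isRewiring
    (hr : IsConjInvariantEquivOn (alternatingGroup α) {u | IsFixedPointFreeInvolution u} r)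
    (hα : 8 < Fintype.card α) {x y : Perm α} (hx : IsFixedPointFreeInvolution x)
    (hy : IsFixedPointFreeInvolution y) (hxy : r x y) (hne : x ≠ y) :
    ∃ u w, IsFixedPointFreeInvolution u ∧ IsRewiring u w ∧ r u w := by
  have of_apply_eq : ∀ {x y : Perm α}, IsFixedPointFreeInvolution x →
      IsFixedPointFreeInvolution y → r x y → x ≠ y → (∃ e, x e = y e) →
      ∃ u w, IsFixedPointFreeInvolution u ∧ IsRewiring u w ∧ r u w := by
    rintro x y hx hy hxy hne ⟨e, he⟩
    obtain ⟨a, ha⟩ := not_forall.mp (mt Equiv.ext hne)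
    obtain ⟨g, hg, hgx, hw⟩ := hx.exists_isRewiring_conj_of_apply_eq hy ha he
    exact ⟨y, _, hy, hw, hr.rel_conj_of_commute hg hgx hx hy (hy.conj g) hxy⟩
  by_cases he : ∃ e, x e = y e
  · exact of_apply_eq hx hy hxy hne he
  obtain ⟨g, hg, hgx, hgy, hagree⟩ := hx.exists_conj_ne_and_apply_eq hα hy (not_exists.mp he)
  exact of_apply_eq hy (hy.conj g) (hr.rel_conj_of_commute hg hgx hx hy (hy.conj g) hxy)
    hgy.symm hagree

theorem rel_of_isRewiring
    (hr : IsConjInvariantEquivOn (alternatingGroup α) {u | IsFixedPointFreeInvolution u} r)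
    (hα : 4 < Fintype.card α) {u w u' w' : Perm α} (hu : IsFixedPointFreeInvolution u)
    (huw : IsRewiring u w) (hruw : r u w) (hu' : IsFixedPointFreeInvolution u')
    (huw' : IsRewiring u' w') : r u' w' := by
  obtain ⟨g, hg, rfl, rfl⟩ :=
    hu.exists_mem_alternatingGroup_conj_eq_conj_eq_of_isRewiring hα hu' huw huw'
  exact hr.conj g hg u hu w (huw.isFixedPointFreeInvolution hu) hruw

theorem rel_of_forall_isRewiring
    (hr : IsConjInvariantEquivOn (alternatingGroup α) {u | IsFixedPointFreeInvolution u} r)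
    (hrw : ∀ u w, IsFixedPointFreeInvolution u → IsRewiring u w → r u w) {u v : Perm α}
    (hu : IsFixedPointFreeInvolution u) (hv : IsFixedPointFreeInvolution v) : r u v := by
  induction hk : #({p | u p ≠ v p} : Finset α) using Nat.strong_induction_on generalizing u with
  | _ k ih =>
  by_cases huv : u = v
  · exact huv ▸ hr.refl u hu
  obtain ⟨a, ha⟩ := not_forall.mp (mt Equiv.ext huv)
  have huw : IsRewiring u (swap (u a) (v a) * u * swap (u a) (v a)) :=
    ⟨u a, v a, Ne.symm ha, by rw [hu.involutive]; exact hv.apply_ne a, rfl⟩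
  have hw := huw.isFixedPointFreeInvolution hu
  exact hr.trans u hu _ hw v hv (hrw u _ hu huw)
    (ih _ (hk ▸ card_lt_card (filter_apply_ne_swap_conj_ssubset hu hv ha)) hw rfl)

end IsConjInvariantEquivOn

namespace Equiv.Perm

theorem isPrimitiveConjActionOf_fixedPointFreeInvolutions {α : Type*} [Fintype α]
    [DecidableEq α] (hα : 8 < Fintype.card α) :
    IsPrimitiveConjActionOf (alternatingGroup α) {u : Perm α | IsFixedPointFreeInvolution u} := by
  have : Nonempty α := Fintype.card_pos_iff.mp (by omega)
  refine ⟨fun u hu v hv => hu.exists_mem_alternatingGroup_conj_eq hv, fun r h₁ h₂ h₃ h₄ => ?_⟩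
  have hr : IsConjInvariantEquivOn (alternatingGroup α) {u | IsFixedPointFreeInvolution u} r :=
    ⟨h₁, h₂, h₃, h₄⟩
  by_cases h : ∃ x y, IsFixedPointFreeInvolution x ∧ IsFixedPointFreeInvolution y ∧ x ≠ y ∧ r x y
  · obtain ⟨x, y, hx, hy, hne, hxy⟩ := h
    obtain ⟨u, w, hu, huw, hruw⟩ := hr.exists_rel_isRewiring hα hx hy hxy hne
    exact Or.inr fun x hx y hy => hr.rel_of_forall_isRewiring
      (fun u' w' hu' huw' => hr.rel_of_isRewiring (by omega) hu huw hruw hu' huw') hx hy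
  · exact Or.inl fun x hx y hy =>
      ⟨fun hxy => not_not.mp fun hne => h ⟨x, y, hx, hy, hne, hxy⟩, fun hxy => hxy ▸ h₁ x hx⟩

end Equiv.Perm

theorem primitive_fpf_involutions_alt_general (n : ℕ) (hn : 12 ≤ n) :
    IsPrimitiveConjActionOf (alternatingGroup (Fin n))
      {σ : Equiv.Perm (Fin n) | σ ≠ 1 ∧ σ ^ 2 = 1 ∧ ∀ x : Fin n, σ x ≠ x} := by
  have : Nonempty (Fin n) := ⟨⟨0, by omega⟩⟩
  simp_rw [← Perm.isFixedPointFreeInvolution_iff]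
  refine Perm.isPrimitiveConjActionOf_fixedPointFreeInvolutions ?_
  rw [Fintype.card_fin]
  omega

/-- For `n ≥ 12` with `4 ∣ n`, the conjugation action of the alternating group `A_n`
on the set of fixed-point-free involutions of `Fin n` (all of which are even, and
which form a single conjugacy class of `A_n`) is primitive. -/
theorem primitive_fpf_involutions_alt (n : ℕ) (hn : 12 ≤ n) (hdvd : 4 ∣ n) :
    IsPrimitiveConjActionOf (alternatingGroup (Fin n))
      {σ : Equiv.Perm (Fin n) | σ ≠ 1 ∧ σ ^ 2 = 1 ∧ ∀ x : Fin n, σ x ≠ x} :=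
  primitive_fpf_involutions_alt_general n hn
end

section
/- Let n ≥ 5 and let π ∈ Equiv.Perm (Fin n) be an odd permutation (Equiv.Perm.sign π = −1, which is equivalent to the normal closure of {π} being all of S_n). Then the conjugation action of Equiv.Perm (Fin n) on the conjugacy class of π is primitive if and only if π is a transposition, or n ≡ 2 (mod 4) and π is a fixed-point-free involution. -/
open Equiv Equiv.Perm
open scoped Pointwise

section ConjInvariantEquiv

variable {G : Type*} [Group G]

structure IsConjInvariantEquiv (C : Set G) (r : G → G → Prop) : Prop where
  refl : ∀ x ∈ C, r x x
  symm : ∀ x ∈ C, ∀ y ∈ C, r x y → r y x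
  trans : ∀ x ∈ C, ∀ y ∈ C, ∀ z ∈ C, r x y → r y z → r x z
  conj : ∀ g : G, ∀ x ∈ C, ∀ y ∈ C, r x y → r (g * x * g⁻¹) (g * y * g⁻¹)

theorem IsPrimitiveConjAction.injOn_or_forall_eq {C : Set G} (h : IsPrimitiveConjAction C)
    {β : Type*} (φ : G → β) (hφ : ∀ g x y, φ x = φ y → φ (g * x * g⁻¹) = φ (g * y * g⁻¹)) :
    Set.InjOn φ C ∨ ∀ x ∈ C, ∀ y ∈ C, φ x = φ y :=
  (h.2 (fun x y => φ x = φ y) (fun _ _ => rfl) (fun _ _ _ _ => Eq.symm)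
    (fun _ _ _ _ _ _ => Eq.trans) (fun g x _ y _ => hφ g x y)).imp
    (fun h _ hx _ hy => (h _ hx _ hy).1) id

theorem conj_mem_conjugatesOf {x y : G} (hy : y ∈ conjugatesOf x) (g : G) :
    g * y * g⁻¹ ∈ conjugatesOf x :=
  (hy : IsConj x y).trans (isConj_iff.mpr ⟨g, rfl⟩)

namespace IsConjInvariantEquiv

variable {x : G} {r : G → G → Prop}

def blockStabilizer (hr : IsConjInvariantEquiv (conjugatesOf x) r) : Subgroup G where
  carrier := {g | r x (g * x * g⁻¹)}
  one_mem' := by simpa using hr.refl x (IsConj.refl x)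
  mul_mem' {g h} hg hh := by
    have hx : x ∈ conjugatesOf x := IsConj.refl x
    have hgh := hr.conj g x hx _ (conj_mem_conjugatesOf hx h) hh
    rw [show g * (h * x * h⁻¹) * g⁻¹ = g * h * x * (g * h)⁻¹ by group] at hgh
    exact hr.trans _ hx _ (conj_mem_conjugatesOf hx g) _ (conj_mem_conjugatesOf hx _) hg hgh
  inv_mem' {g} hg := by
    have hx : x ∈ conjugatesOf x := IsConj.refl x
    have hg' := hr.conj g⁻¹ x hx _ (conj_mem_conjugatesOf hx g) hg
    rw [show g⁻¹ * (g * x * g⁻¹) * g⁻¹⁻¹ = x by group] at hg'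
    exact hr.symm _ (conj_mem_conjugatesOf hx _) _ hx hg'

variable (hr : IsConjInvariantEquiv (conjugatesOf x) r)

theorem mem_blockStabilizer {g : G} : g ∈ hr.blockStabilizer ↔ r x (g * x * g⁻¹) := Iff.rfl

theorem centralizer_le_blockStabilizer : Subgroup.centralizer {x} ≤ hr.blockStabilizer := by
  intro g hg
  rw [mem_blockStabilizer, Subgroup.mem_centralizer_singleton_iff.mp hg, mul_inv_cancel_right]
  exact hr.refl x (IsConj.refl x)

theorem forall_rel_of_blockStabilizer_eq_top (h : hr.blockStabilizer = ⊤) :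
    ∀ y ∈ conjugatesOf x, ∀ z ∈ conjugatesOf x, r y z := by
  have hx : x ∈ conjugatesOf x := IsConj.refl x
  intro y hy z hz
  obtain ⟨g, rfl⟩ := isConj_iff.mp hy
  obtain ⟨k, rfl⟩ := isConj_iff.mp hz
  have hgx : r x (g * x * g⁻¹) := (hr.mem_blockStabilizer).mp (h ▸ Subgroup.mem_top g)
  have hkx : r x (k * x * k⁻¹) := (hr.mem_blockStabilizer).mp (h ▸ Subgroup.mem_top k)
  exact hr.trans _ (conj_mem_conjugatesOf hx g) _ hx _ (conj_mem_conjugatesOf hx k)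
    (hr.symm _ hx _ (conj_mem_conjugatesOf hx g) hgx) hkx

theorem rel_iff_eq_of_blockStabilizer_le_centralizer
    (h : hr.blockStabilizer ≤ Subgroup.centralizer {x}) :
    ∀ y ∈ conjugatesOf x, ∀ z ∈ conjugatesOf x, r y z ↔ y = z := by
  have hx : x ∈ conjugatesOf x := IsConj.refl x
  intro y hy z hz
  refine ⟨fun hyz => ?_, fun hyz => hyz ▸ hr.refl y hy⟩
  obtain ⟨g, rfl⟩ := isConj_iff.mp hy
  obtain ⟨k, rfl⟩ := isConj_iff.mp hz
  have hrel := hr.conj g⁻¹ _ (conj_mem_conjugatesOf hx g) _ (conj_mem_conjugatesOf hx k) hyz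
  rw [show g⁻¹ * (g * x * g⁻¹) * g⁻¹⁻¹ = x by group,
    show g⁻¹ * (k * x * k⁻¹) * g⁻¹⁻¹ = g⁻¹ * k * x * (g⁻¹ * k)⁻¹ by group] at hrel
  have hcomm := Subgroup.mem_centralizer_singleton_iff.mp (h hrel)
  calc g * x * g⁻¹ = g * (g⁻¹ * k * x * (g⁻¹ * k)⁻¹) * g⁻¹ := by rw [hcomm]; group
    _ = k * x * k⁻¹ := by group

end IsConjInvariantEquiv

theorem isPrimitiveConjAction_of_isCoatom_centralizer {x : G}
    (h : IsCoatom (Subgroup.centralizer {x})) : IsPrimitiveConjAction (conjugatesOf x) := by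
  refine ⟨fun y hy z hz => isConj_iff.mp ((hy : IsConj x y).symm.trans hz),
    fun r hrefl hsymm htrans hconj => ?_⟩
  have hr : IsConjInvariantEquiv (conjugatesOf x) r := ⟨hrefl, hsymm, htrans, hconj⟩
  rcases h.le_iff.mp hr.centralizer_le_blockStabilizer with htop | hcent
  · exact Or.inr (hr.forall_rel_of_blockStabilizer_eq_top htop)
  · exact Or.inl (hr.rel_iff_eq_of_blockStabilizer_le_centralizer hcent.le)

end ConjInvariantEquiv

theorem Finset.map_swap_of_mem {α : Type*} [DecidableEq α] {s : Finset α} {u v : α} (hu : u ∈ s)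
    (hv : v ∈ s) : s.map (swap u v).toEmbedding = s := by
  ext x
  rw [Finset.mem_map_equiv, symm_swap, swap_apply_def]
  split_ifs with h1 h2 <;> simp_all

namespace Equiv.Perm

variable {α : Type*} [DecidableEq α]

theorem conj_swap_apply_of_ne {π : Perm α} {a c : α} (ha : π a ≠ a) (hc : c ≠ a) :
    (swap (π a) c * π * (swap (π a) c)⁻¹) a = c := by
  simp [swap_apply_of_ne_of_ne ha.symm hc.symm]

theorem exists_isConj_ne_ne_inv [Fintype α] (hα : 4 ≤ Fintype.card α) {π : Perm α}
    (h : π ^ 2 ≠ 1) : ∃ σ, IsConj π σ ∧ σ ≠ π ∧ σ ≠ π⁻¹ := by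
  obtain ⟨a, ha⟩ : ∃ a, π (π a) ≠ a := by
    by_contra! h'
    exact h (Equiv.ext fun a => by simpa [sq] using h' a)
  have hπa : π a ≠ a := fun h => ha (by rw [h, h])
  obtain ⟨c, -, hc⟩ := Finset.exists_mem_notMem_of_card_lt_card
    (s := {a, π a, π⁻¹ a}) (t := Finset.univ) (by
      rw [Finset.card_univ]; exact (Finset.card_le_three).trans_lt (by omega))
  simp only [Finset.mem_insert, Finset.mem_singleton, not_or] at hc
  obtain ⟨hca, hcπ, hcπinv⟩ := hc
  have hσa := conj_swap_apply_of_ne hπa hca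
  refine ⟨_, isConj_iff.mpr ⟨swap (π a) c, rfl⟩, fun h => hcπ ?_, fun h => hcπinv ?_⟩ <;>
    rw [← hσa, h]

theorem sq_eq_one_of_isPrimitiveConjAction [Fintype α] (hα : 4 ≤ Fintype.card α) {π : Perm α}
    (h : IsPrimitiveConjAction (conjugatesOf π)) : π ^ 2 = 1 := by
  have hpair : ∀ g σ : Perm α, ({g * σ * g⁻¹, (g * σ * g⁻¹)⁻¹} : Set (Perm α)) =
      (fun τ => g * τ * g⁻¹) '' {σ, σ⁻¹} := fun g σ => by
    simp [Set.image_pair, mul_assoc]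
  rcases h.injOn_or_forall_eq (fun σ => ({σ, σ⁻¹} : Set (Perm α)))
    (fun g x y hxy => by simp only [hpair, hxy]) with hinj | hconst
  · have hinv : IsConj π π⁻¹ := isConj_iff_cycleType_eq.mpr (cycleType_inv π).symm
    rw [sq, mul_eq_one_iff_eq_inv]
    exact hinj (IsConj.refl π) hinv (by simp [Set.pair_comm])
  · by_contra h2
    obtain ⟨σ, hσ, hσπ, hσπinv⟩ := exists_isConj_ne_ne_inv hα h2
    have hmem : σ ∈ ({π, π⁻¹} : Set (Perm α)) := by
      rw [hconst π (IsConj.refl π) σ hσ]; exact Set.mem_insert σ _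
    rcases hmem with h | h
    exacts [hσπ h, hσπinv h]

theorem isSwap_or_forall_apply_ne_of_isPrimitiveConjAction [Fintype α] {π : Perm α}
    (h : IsPrimitiveConjAction (conjugatesOf π)) (hπ : π ≠ 1) : π.IsSwap ∨ ∀ x, π x ≠ x := by
  obtain ⟨a, ha⟩ : ∃ a, π a ≠ a := by
    by_contra! h'
    exact hπ (Equiv.ext h')
  have ha' : a ∈ π.support := mem_support.mpr ha
  rcases h.injOn_or_forall_eq support (fun g x y hxy => by rw [support_conj, support_conj, hxy])
    with hinj | hconst
  · left
    by_contra hswap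
    have h3 : 2 < π.support.card := lt_of_le_of_ne (two_le_card_support_of_ne_one hπ)
      (fun h => hswap (card_support_eq_two.mp h.symm))
    obtain ⟨c, hc, hc'⟩ := Finset.exists_mem_notMem_of_card_lt_card
      (s := {a, π a}) (t := π.support) ((Finset.card_le_two).trans_lt h3)
    simp only [Finset.mem_insert, Finset.mem_singleton, not_or] at hc'
    have hsupp : (swap (π a) c * π * (swap (π a) c)⁻¹).support = π.support := by
      rw [support_conj]
      exact Finset.map_swap_of_mem (apply_mem_support.mpr ha') hc
    have := hinj (isConj_iff.mpr ⟨swap (π a) c, rfl⟩) (IsConj.refl π) hsupp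
    exact hc'.2 (by rw [← conj_swap_apply_of_ne ha hc'.1, this])
  · right
    intro f hf
    have hsupp := hconst π (IsConj.refl π) _ (isConj_iff.mpr ⟨swap a f, rfl⟩)
    rw [support_conj] at hsupp
    have hfmem := Finset.mem_map_of_mem (swap a f).toEmbedding ha'
    rw [← hsupp] at hfmem
    exact mem_support.mp (by simpa using hfmem) hf

theorem card_mod_four_eq_two_of_sign_eq_neg_one [Fintype α] {π : Perm α} (h2 : π ^ 2 = 1)
    (hfix : ∀ x, π x ≠ x) (hsign : sign π = -1) : Fintype.card α % 4 = 2 := by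
  have hcycle : ∀ m ∈ π.cycleType, m = 2 := fun m hm =>
    Nat.le_antisymm (Nat.le_of_dvd two_pos ((dvd_of_mem_cycleType hm).trans
      (orderOf_dvd_of_pow_eq_one h2))) (two_le_of_mem_cycleType hm)
  have hsum : π.cycleType.sum = Fintype.card α := by
    rw [sum_cycleType, Finset.eq_univ_iff_forall.mpr fun x => mem_support.mpr (hfix x),
      Finset.card_univ]
  rw [Multiset.eq_replicate_card.mpr hcycle, Multiset.sum_replicate, smul_eq_mul] at hsum
  rw [sign_of_cycleType, Multiset.eq_replicate_card.mpr hcycle, Multiset.sum_replicate,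
    Multiset.card_replicate, smul_eq_mul] at hsign
  obtain ⟨k, hk⟩ : Odd (Multiset.card π.cycleType) := by
    by_contra heven
    rw [Nat.not_odd_iff_even] at heven
    rw [((heven.mul_right 2).add heven).neg_one_pow] at hsign
    exact absurd hsign (by decide)
  omega

theorem swap_eq_swap_iff {a b x y : α} (hab : a ≠ b) (hxy : x ≠ y) :
    swap x y = swap a b ↔ ({x, y} : Set α) = {a, b} := by
  constructor
  · intro h
    ext z
    simpa [swap_apply_ne_self_iff, hab, hxy] using congrArg (fun σ : Perm α => σ z ≠ z) h
  · rw [Set.pair_eq_pair_iff]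
    rintro (⟨rfl, rfl⟩ | ⟨rfl, rfl⟩)
    exacts [rfl, swap_comm _ _]

theorem centralizer_swap {a b : α} (hab : a ≠ b) :
    Subgroup.centralizer {swap a b} = MulAction.stabilizer (Perm α) ({a, b} : Set α) := by
  ext g
  rw [Subgroup.mem_centralizer_singleton_iff, MulAction.mem_stabilizer_iff, mul_swap_eq_swap_mul,
    mul_left_inj, swap_eq_swap_iff hab (g.injective.ne hab)]
  simp [Set.smul_set_insert, Set.smul_set_singleton]

theorem isCoatom_centralizer_swap [Fintype α] {a b : α} (hab : a ≠ b) (h3 : 3 ≤ Fintype.card α)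
    (h4 : Fintype.card α ≠ 4) : IsCoatom (Subgroup.centralizer {swap a b}) := by
  rw [centralizer_swap hab]
  obtain ⟨c, -, hc⟩ := Finset.exists_mem_notMem_of_card_lt_card
    (s := {a, b}) (t := Finset.univ) (by
      rw [Finset.card_univ]; exact (Finset.card_le_two).trans_lt (by omega))
  refine isCoatom_stabilizer (Set.insert_nonempty a {b}) ⟨c, by simpa using hc⟩ ?_
  rw [Set.ncard_pair hab, Nat.card_eq_fintype_card]
  omega

theorem eq_top_of_forall_swap_mem [Finite α] (H : Subgroup (Perm α)) (a : α)
    (h : ∀ c, swap a c ∈ H) : H = ⊤ := by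
  rw [eq_top_iff, ← closure_isSwap, Subgroup.closure_le]
  rintro _ ⟨x, y, -, rfl⟩
  exact SubmonoidClass.swap_mem_trans H (swap_comm a x ▸ h x) (h y)

theorem swap_apply_mem_centralizer {π : Perm α} (hinv : ∀ x, π (π x) = x) (x : α) :
    swap x (π x) ∈ Subgroup.centralizer {π} := by
  rw [Subgroup.mem_centralizer_singleton_iff, mul_swap_eq_swap_mul, hinv, swap_comm]

theorem exists_mem_centralizer_apply_eq {π : Perm α} (hinv : ∀ x, π (π x) = x)
    (hfix : ∀ x, π x ≠ x) {u v c : α} (hvu : v ≠ u) (hvπu : v ≠ π u) (hcu : c ≠ u)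
    (hcπu : c ≠ π u) : ∃ z ∈ Subgroup.centralizer {π}, z u = u ∧ z v = c := by
  have hπ_ne {x y : α} (h : x ≠ π y) : π x ≠ y := fun h' => h (by rw [← h', hinv])
  by_cases hc : c = π v
  · subst hc
    exact ⟨swap v (π v), swap_apply_mem_centralizer hinv v,
      swap_apply_of_ne_of_ne hvu.symm (hπ_ne hvπu).symm, swap_apply_left v (π v)⟩
  have hcomm : swap v c * swap (π v) (π c) = swap (π v) (π c) * swap v c := by
    rw [mul_swap_eq_swap_mul, swap_apply_of_ne_of_ne (hfix v) (Ne.symm hc),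
      swap_apply_of_ne_of_ne (hπ_ne hc) (hfix c)]
  refine ⟨swap v c * swap (π v) (π c), ?_, ?_, ?_⟩
  · rw [Subgroup.mem_centralizer_singleton_iff]
    calc swap v c * swap (π v) (π c) * π
        = swap (π v) (π c) * (swap (π (π v)) (π (π c)) * π) := by rw [hcomm, hinv, hinv, mul_assoc]
      _ = π * (swap v c * swap (π v) (π c)) := by
          rw [← mul_swap_eq_swap_mul π (π v), ← mul_assoc, ← mul_swap_eq_swap_mul, mul_assoc]
  · rw [mul_apply, swap_apply_of_ne_of_ne (hπ_ne hvπu).symm (hπ_ne hcπu).symm,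
      swap_apply_of_ne_of_ne hvu.symm hcu.symm]
  · rw [mul_apply, swap_apply_of_ne_of_ne (hfix v).symm (hπ_ne hc).symm,
      swap_apply_left]

theorem exists_swap_mem_of_centralizer_lt {π : Perm α} (hinv : ∀ x, π (π x) = x)
    (hfix : ∀ x, π x ≠ x) {K : Subgroup (Perm α)} (hK : Subgroup.centralizer {π} < K) :
    ∃ y v, v ≠ y ∧ v ≠ π y ∧ swap y v ∈ K := by
  obtain ⟨k, hkK, hkZ⟩ := SetLike.exists_of_lt hK
  rw [Subgroup.mem_centralizer_singleton_iff] at hkZ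
  obtain ⟨y, hy⟩ : ∃ y, k (π y) ≠ π (k y) := by
    by_contra! h
    exact hkZ (Equiv.ext h)
  -- `swap y v` is the conjugate by `k⁻¹` of the 2-cycle `(k y, π (k y))` of `π`, and `v ≠ π y`
  -- because `k` does not commute with `π` at `y`.
  set v := k⁻¹ (π (k y))
  have hkv : k v = π (k y) := by simp [v]
  refine ⟨y, v, fun h => hfix (k y) (by rw [← hkv, h]), fun h => hy (by rw [← h, hkv]), ?_⟩
  rw [show y = k⁻¹ (k y) by simp, swap_apply_apply, inv_inv]
  exact K.mul_mem (K.mul_mem (K.inv_mem hkK) (hK.le (swap_apply_mem_centralizer hinv _))) hkK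

theorem isCoatom_centralizer_of_sq_eq_one [Fintype α] {π : Perm α} (h2 : π ^ 2 = 1)
    (hfix : ∀ x, π x ≠ x) (hα : 3 ≤ Fintype.card α) : IsCoatom (Subgroup.centralizer {π}) := by
  have hinv (x : α) : π (π x) = x := by rw [← mul_apply, ← sq, h2, one_apply]
  refine ⟨fun htop => ?_, fun K hK => ?_⟩
  · obtain ⟨a⟩ : Nonempty α := Fintype.card_pos_iff.mp (by omega)
    obtain ⟨b, -, hb⟩ := Finset.exists_mem_notMem_of_card_lt_card
      (s := {a, π a}) (t := Finset.univ) (by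
        rw [Finset.card_univ]; exact (Finset.card_le_two).trans_lt (by omega))
    simp only [Finset.mem_insert, Finset.mem_singleton, not_or] at hb
    have hcomm := Subgroup.mem_centralizer_singleton_iff.mp (htop ▸ Subgroup.mem_top (swap a b))
    have := congrArg (fun σ : Perm α => σ (π a)) hcomm
    simp only [mul_apply, hinv, swap_apply_left,
      swap_apply_of_ne_of_ne (hfix a) (fun h => hb.2 h.symm)] at this
    exact hb.1 this
  · obtain ⟨y, v, hvy, hvπy, hyv⟩ := exists_swap_mem_of_centralizer_lt hinv hfix hK
    refine eq_top_of_forall_swap_mem K y fun c => ?_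
    by_cases hcy : c = y
    · rw [hcy, swap_self]; exact K.one_mem
    by_cases hcπy : c = π y
    · rw [hcπy]; exact hK.le (swap_apply_mem_centralizer hinv y)
    obtain ⟨z, hzZ, hzy, hzv⟩ := exists_mem_centralizer_apply_eq hinv hfix hvy hvπy hcy hcπy
    rw [← hzy, ← hzv, swap_apply_apply]
    exact K.mul_mem (K.mul_mem (hK.le hzZ) hyv) (K.inv_mem (hK.le hzZ))

end Equiv.Perm

/-- For `n ≥ 5` and an odd permutation `π ∈ S_n`, the conjugation action of `S_n` on
the conjugacy class of `π` is primitive if and only if `π` is a transposition, or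
`n ≡ 2 (mod 4)` and `π` is a fixed-point-free involution. -/
theorem primitive_symm_iff (n : ℕ) (hn : 5 ≤ n) (π : Equiv.Perm (Fin n))
    (hπ : Equiv.Perm.sign π = -1) :
    IsPrimitiveConjAction {σ : Equiv.Perm (Fin n) | IsConj π σ} ↔
      (π.IsSwap ∨ (n % 4 = 2 ∧ π ^ 2 = 1 ∧ ∀ x : Fin n, π x ≠ x)) := by
  have hcard : Fintype.card (Fin n) = n := Fintype.card_fin n
  constructor
  · intro h
    have hπ1 : π ≠ 1 := by rintro rfl; simp at hπ
    have h2 : π ^ 2 = 1 := sq_eq_one_of_isPrimitiveConjAction (by omega) h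
    refine (isSwap_or_forall_apply_ne_of_isPrimitiveConjAction h hπ1).imp_right
      fun hfix => ⟨?_, h2, hfix⟩
    rw [← hcard]
    exact card_mod_four_eq_two_of_sign_eq_neg_one h2 hfix hπ
  · rintro (⟨a, b, hab, rfl⟩ | ⟨-, h2, hfix⟩)
    · exact isPrimitiveConjAction_of_isCoatom_centralizer
        (isCoatom_centralizer_swap hab (by omega) (by omega))
    · exact isPrimitiveConjAction_of_isCoatom_centralizer
        (isCoatom_centralizer_of_sq_eq_one h2 hfix (by omega))
end

section
/- Let G be a finite group and e ∈ G an element whose normal closure is G (⟨e^G⟩ = G, where e^G denotes the conjugacy class of e). If the cyclic subgroup generated by e satisfies {e} ⊊ ⟨e⟩ ∩ e^G ⊊ e^G, then the conjugation action of G on the conjugacy class e^G is not primitive: there exists a G-invariant equivalence relation on e^G other than equality and the full relation. (One such is: g ∼ h if and only if h is a power of g; on a conjugacy class of a finite group this relation is a G-invariant equivalence.) -/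
/-- If `x` and `y` are conjugate and `y ∈ ⟨x⟩`, then `⟨x⟩ = ⟨y⟩`. -/
private lemma zpowers_eq_of_isConj {G : Type*} [Group G] [Finite G] {x y : G}
    (hc : IsConj x y) (hy : y ∈ Subgroup.zpowers x) :
    Subgroup.zpowers x = Subgroup.zpowers y := by
  have hle : Subgroup.zpowers y ≤ Subgroup.zpowers x :=
    Subgroup.zpowers_le.mpr hy
  have hord : orderOf x = orderOf y := by
    obtain ⟨a, ha⟩ := hc
    exact SemiconjBy.orderOf_eq _ ha
  exact (Subgroup.eq_of_le_of_card_ge hle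
    (by rw [Nat.card_zpowers, Nat.card_zpowers, hord])).symm

/-- Lemma "mocnina": let `G` be a finite group and `e ∈ G` an element whose normal
closure (the subgroup generated by the conjugacy class `e^G`) is all of `G`.
If `{e} ⊊ ⟨e⟩ ∩ e^G ⊊ e^G`, then the conjugation action of `G` on the conjugacy
class `e^G` is not primitive: there is a `G`-invariant equivalence relation on `e^G`
other than equality and the full relation. -/
theorem imprimitive_of_powers {G : Type*} [Group G] [Finite G] (e : G)
    (hgen : Subgroup.normalClosure {e} = ⊤)
    (h1 : {e} ⊂ ((Subgroup.zpowers e : Set G) ∩ {x : G | IsConj e x}))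
    (h2 : ((Subgroup.zpowers e : Set G) ∩ {x : G | IsConj e x}) ⊂ {x : G | IsConj e x}) :
    ∃ r : G → G → Prop,
      (∀ x ∈ {x : G | IsConj e x}, r x x) ∧
      (∀ x ∈ {x : G | IsConj e x}, ∀ y ∈ {x : G | IsConj e x}, r x y → r y x) ∧
      (∀ x ∈ {x : G | IsConj e x}, ∀ y ∈ {x : G | IsConj e x}, ∀ z ∈ {x : G | IsConj e x},
        r x y → r y z → r x z) ∧
      (∀ g : G, ∀ x ∈ {x : G | IsConj e x}, ∀ y ∈ {x : G | IsConj e x},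
        r x y → r (g * x * g⁻¹) (g * y * g⁻¹)) ∧
      ¬ (∀ x ∈ {x : G | IsConj e x}, ∀ y ∈ {x : G | IsConj e x}, (r x y ↔ x = y)) ∧
      ¬ (∀ x ∈ {x : G | IsConj e x}, ∀ y ∈ {x : G | IsConj e x}, r x y) := by
  refine ⟨fun x y => Subgroup.zpowers x = Subgroup.zpowers y, fun x _ => rfl,
    fun x _ y _ h => h.symm, fun x _ y _ z _ hxy hyz => hxy.trans hyz, ?_, ?_, ?_⟩
  · -- invariance under conjugation
    intro g x _ y _ h
    have key : ∀ a : G, Subgroup.zpowers (g * a * g⁻¹)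
        = (Subgroup.zpowers a).map (MulAut.conj g).toMonoidHom := by
      intro a
      rw [MonoidHom.map_zpowers]
      rfl
    rw [key, key, h]
  · -- not equality: pick z ∈ ⟨e⟩ ∩ e^G with z ≠ e
    intro hall
    obtain ⟨hsub, hne⟩ := h1
    obtain ⟨z, hz, hznot⟩ := Set.not_subset.mp hne
    have hzne : z ≠ e := by simpa using hznot
    have hzc : IsConj e z := hz.2
    have : Subgroup.zpowers e = Subgroup.zpowers z := zpowers_eq_of_isConj hzc hz.1
    exact hzne ((hall e (IsConj.refl e) z hzc).mp this).symm
  · -- not full: pick w ∈ e^G with w ∉ ⟨e⟩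
    intro hall
    obtain ⟨hsub, hne⟩ := h2
    obtain ⟨w, hw, hwnot⟩ := Set.not_subset.mp hne
    have hwe : w ∉ (Subgroup.zpowers e : Set G) := fun h => hwnot ⟨h, hw⟩
    have := hall e (IsConj.refl e) w hw
    exact hwe (this ▸ Subgroup.mem_zpowers w)
end

section
/- Let p be a prime, t ≥ 1, and V = Fin t → ZMod p the t-dimensional vector space over ZMod p. Let f : V ≃ₗ[ZMod p] V be a linear automorphism with f ≠ id such that the only f-invariant submodules of V are ⊥ and ⊤ (f acts irreducibly). For a ∈ V define the left translation L_a : V → V by L_a(x) = (a − f a) + f x. Then every equivalence relation r on V that is invariant under all left translations (meaning r x y ↔ r (L_a x) (L_a y) for all a, x, y ∈ V) is either the equality relation or the full relation. In other words, the finite affine quandle Aff(ZMod p^t, f) with operation a * b = (a − f a) + f b is primitive whenever it is simple. -/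
/-- A finite simple affine quandle is primitive. Let `V = (ZMod p)^t` with `p` prime
and `t ≥ 1`, and let `f` be a linear automorphism of `V`, different from the
identity, acting irreducibly (no nontrivial proper `f`-invariant submodule). Then
every equivalence relation on `V` invariant under all left translations
`L_a(x) = (a - f a) + f x` of the affine quandle `Aff((ZMod p)^t, f)` is either the
equality relation or the full relation. -/
theorem affine_simple_implies_primitive (p t : ℕ) (hp : p.Prime) (ht : 1 ≤ t)
    (f : (Fin t → ZMod p) ≃ₗ[ZMod p] (Fin t → ZMod p))
    (hf1 : (f : (Fin t → ZMod p) → (Fin t → ZMod p)) ≠ id)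
    (hirr : ∀ W : Submodule (ZMod p) (Fin t → ZMod p),
      (∀ v ∈ W, f v ∈ W) → W = ⊥ ∨ W = ⊤)
    (r : (Fin t → ZMod p) → (Fin t → ZMod p) → Prop)
    (hequiv : Equivalence r)
    (hinv : ∀ a x y : Fin t → ZMod p, r x y ↔ r ((a - f a) + f x) ((a - f a) + f y)) :
    (∀ x y : Fin t → ZMod p, (r x y ↔ x = y)) ∨ (∀ x y : Fin t → ZMod p, r x y) := by
  haveI : Fact p.Prime := ⟨hp⟩
  -- r is invariant under f
  have hf : ∀ x y : Fin t → ZMod p, r x y ↔ r (f x) (f y) := by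
    intro x y
    have h := hinv 0 x y
    simpa using h
  -- the map x ↦ x - f x is surjective
  have hg : Function.Surjective (fun x : Fin t → ZMod p => x - f x) := by
    set g : (Fin t → ZMod p) →ₗ[ZMod p] (Fin t → ZMod p) := LinearMap.id - f.toLinearMap with hgdef
    have hker : LinearMap.ker g = ⊥ ∨ LinearMap.ker g = ⊤ := by
      apply hirr
      intro v hv
      simp only [LinearMap.mem_ker, hgdef, LinearMap.sub_apply, LinearMap.id_apply,
        LinearEquiv.coe_coe, sub_eq_zero] at hv ⊢
      exact congrArg f hv
    rcases hker with h | h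
    · have hinj : Function.Injective g := LinearMap.ker_eq_bot.mp h
      have hsurj : Function.Surjective g := Finite.injective_iff_surjective.mp hinj
      intro c
      obtain ⟨a, ha⟩ := hsurj c
      exact ⟨a, by simpa [hgdef, sub_eq_iff_eq_add] using ha⟩
    · exfalso
      apply hf1
      funext v
      have hv : v ∈ LinearMap.ker g := by rw [h]; trivial
      simp only [LinearMap.mem_ker, hgdef, LinearMap.sub_apply, LinearMap.id_apply,
        LinearEquiv.coe_coe, sub_eq_zero] at hv
      simpa using hv.symm
  -- r is invariant under all translations
  have htrans : ∀ c x y : Fin t → ZMod p, r x y ↔ r (c + x) (c + y) := by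
    intro c x y
    obtain ⟨a, ha⟩ := hg c
    have h1 := hinv a (f.symm x) (f.symm y)
    rw [f.apply_symm_apply, f.apply_symm_apply] at h1
    simp only at ha
    rw [ha] at h1
    have h2 := hf (f.symm x) (f.symm y)
    rw [f.apply_symm_apply, f.apply_symm_apply] at h2
    rw [← h2, ← h1]
  -- the r-class of 0 is an additive subgroup
  let W : AddSubgroup (Fin t → ZMod p) :=
    { carrier := {v | r 0 v}
      zero_mem' := hequiv.refl 0
      add_mem' := by
        intro a b ha hb
        have h := (htrans a 0 b).mp hb
        rw [add_zero] at h
        exact hequiv.trans ha h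
      neg_mem' := by
        intro a ha
        have h := (htrans (-a) 0 a).mp ha
        rw [add_zero, neg_add_cancel] at h
        exact hequiv.symm h }
  -- it is a ZMod p submodule
  let Ws : Submodule (ZMod p) (Fin t → ZMod p) := AddSubgroup.toZModSubmodule p W
  have hmem : ∀ v : Fin t → ZMod p, v ∈ Ws ↔ r 0 v := fun v => Iff.rfl
  have hWf : ∀ v ∈ Ws, f v ∈ Ws := by
    intro v hv
    rw [hmem] at hv ⊢
    have h := (hf 0 v).mp hv
    rwa [map_zero] at h
  rcases hirr Ws hWf with h | h
  · left
    intro x y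
    constructor
    · intro hxy
      have h1 := (htrans (-x) x y).mp hxy
      rw [neg_add_cancel] at h1
      have : (-x + y) ∈ Ws := (hmem _).mpr h1
      rw [h] at this
      have h2 : -x + y = 0 := this
      exact (neg_add_eq_zero.mp h2)
    · rintro rfl
      exact hequiv.refl x
  · right
    intro x y
    have h1 : (-x + y) ∈ Ws := by rw [h]; trivial
    have h2 := (hmem _).mp h1
    have h3 := (htrans x 0 (-x + y)).mp h2
    rwa [add_zero, ← add_assoc, add_neg_cancel, zero_add] at h3
end

section
/- For every natural number n with n ≥ 3 and n ≠ 4, the centralizer in Equiv.Perm (Fin n) of the transposition Equiv.swap 0 1 (which is the setwise stabilizer of the pair {0,1} and is isomorphic to S_2 × S_{n−2}) is a maximal proper subgroup of Equiv.Perm (Fin n), i.e., it is a coatom in the lattice of subgroups of Equiv.Perm (Fin n). -/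
/-- For `n ≥ 3`, `n ≠ 4`, the centralizer in `S_n` of the transposition `(0 1)`
(the setwise stabilizer of `{0,1}`, isomorphic to `S_2 × S_{n-2}`) is a maximal
subgroup of `S_n`, i.e. a coatom in the subgroup lattice. -/
theorem centralizer_transposition_maximal (n : ℕ) (hn : 3 ≤ n) (hn4 : n ≠ 4) :
    IsCoatom (Subgroup.centralizer
      {Equiv.swap (⟨0, by omega⟩ : Fin n) (⟨1, by omega⟩ : Fin n)}) := by
  set z0 : Fin n := ⟨0, by omega⟩ with hz0
  set z1 : Fin n := ⟨1, by omega⟩ with hz1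
  set z2 : Fin n := ⟨2, by omega⟩ with hz2
  have h01 : z0 ≠ z1 := by simp [hz0, hz1, Fin.ext_iff]
  have h02 : z0 ≠ z2 := by simp [hz0, hz2, Fin.ext_iff]
  have h12 : z1 ≠ z2 := by simp [hz1, hz2, Fin.ext_iff]
  set τ : Equiv.Perm (Fin n) := Equiv.swap z0 z1 with hτ
  set H := Subgroup.centralizer {τ} with hH
  -- membership characterization
  have memH : ∀ π : Equiv.Perm (Fin n),
      π ∈ H ↔ (π z0 = z0 ∧ π z1 = z1) ∨ (π z0 = z1 ∧ π z1 = z0) := by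
    intro π
    rw [hH, Subgroup.mem_centralizer_singleton_iff]
    constructor
    · intro h
      have hconj : Equiv.swap (π z0) (π z1) = τ :=
        (Equiv.swap_apply_apply π z0 z1).trans (mul_inv_eq_iff_eq_mul.mpr h)
      have h0 : π z1 = τ (π z0) := by
        have := congrArg (fun σ : Equiv.Perm (Fin n) => σ (π z0)) hconj
        simpa using this
      by_cases hc0 : π z0 = z0
      · left
        refine ⟨hc0, ?_⟩
        rw [h0, hc0, hτ, Equiv.swap_apply_left]
      by_cases hc1 : π z0 = z1
      · right
        refine ⟨hc1, ?_⟩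
        rw [h0, hc1, hτ, Equiv.swap_apply_right]
      · exfalso
        have : π z1 = π z0 := by
          rw [h0, hτ, Equiv.swap_apply_of_ne_of_ne hc0 hc1]
        exact h01 (π.injective this).symm
    · intro h
      have hconj : Equiv.swap (π z0) (π z1) = τ := by
        rcases h with ⟨h0, h1⟩ | ⟨h0, h1⟩
        · rw [h0, h1]
        · rw [h0, h1, Equiv.swap_comm]
      have h2 : π * τ * π⁻¹ = τ := (Equiv.swap_apply_apply π z0 z1).symm.trans hconj
      exact mul_inv_eq_iff_eq_mul.mp h2
  have hτH : τ ∈ H := by rw [hH, Subgroup.mem_centralizer_singleton_iff]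
  constructor
  · -- H ≠ ⊤
    intro htop
    have : Equiv.swap z0 z2 ∈ H := htop ▸ Subgroup.mem_top _
    rw [memH] at this
    rcases this with ⟨h0, _⟩ | ⟨h0, _⟩
    · rw [Equiv.swap_apply_left] at h0; exact h02 h0.symm
    · rw [Equiv.swap_apply_left] at h0; exact h12 h0.symm
  · -- maximality
    intro K hK
    have hHK : H ≤ K := hK.le
    have hKH : ¬ K ≤ H := fun h => hK.ne (le_antisymm hHK h)
    obtain ⟨g, hgK, hgH⟩ := SetLike.not_le_iff_exists.mp hKH
    set a := g z0 with ha
    set b := g z1 with hb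
    have hab : a ≠ b := fun h => h01 (g.injective h)
    have hswapK : Equiv.swap a b ∈ K := by
      rw [ha, hb, Equiv.swap_apply_apply]
      exact K.mul_mem (K.mul_mem hgK (hHK hτH)) (K.inv_mem hgK)
    rw [memH, not_or, not_and_or, not_and_or] at hgH
    obtain ⟨hgH1, hgH2⟩ := hgH
    -- find c ∉ {z0, z1} with swap z0 c ∈ K
    have hc : ∃ c, c ≠ z0 ∧ c ≠ z1 ∧ Equiv.swap z0 c ∈ K := by
      by_cases ha0 : a = z0
      · have hb1 : b ≠ z1 := by
          intro h; exact (hgH1.resolve_left (by rw [← ha, ha0]; simp)) (by rw [← hb, h])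
        have hb0 : b ≠ z0 := fun h => hab (ha0.trans h.symm)
        exact ⟨b, hb0, hb1, ha0 ▸ hswapK⟩
      by_cases ha1 : a = z1
      · have hb0 : b ≠ z0 := by
          intro h; exact (hgH2.resolve_left (by rw [← ha, ha1]; simp)) (by rw [← hb, h])
        have hb1 : b ≠ z1 := fun h => hab (ha1.trans h.symm)
        refine ⟨b, hb0, hb1, ?_⟩
        have : Equiv.swap (τ z1) (τ b) = τ * Equiv.swap z1 b * τ⁻¹ :=
          Equiv.swap_apply_apply τ z1 b
        rw [hτ, Equiv.swap_apply_right, ← hτ,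
          Equiv.swap_apply_of_ne_of_ne hb0 hb1] at this
        rw [this]
        exact K.mul_mem (K.mul_mem (hHK hτH) (ha1 ▸ hswapK)) (K.inv_mem (hHK hτH))
      by_cases hb0 : b = z0
      · exact ⟨a, ha0, ha1, by rw [Equiv.swap_comm]; exact hb0 ▸ hswapK⟩
      by_cases hb1 : b = z1
      · refine ⟨a, ha0, ha1, ?_⟩
        have : Equiv.swap (τ a) (τ z1) = τ * Equiv.swap a z1 * τ⁻¹ :=
          Equiv.swap_apply_apply τ a z1
        rw [hτ, Equiv.swap_apply_right, ← hτ,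
          Equiv.swap_apply_of_ne_of_ne ha0 ha1, Equiv.swap_comm] at this
        rw [this]
        exact K.mul_mem (K.mul_mem (hHK hτH) (hb1 ▸ hswapK)) (K.inv_mem (hHK hτH))
      · -- a, b disjoint from {z0, z1}; need n ≥ 5
        have hcard4 : ({z0, z1, a, b} : Finset (Fin n)).card = 4 := by
          have h1 : z0 ∉ ({z1, a, b} : Finset (Fin n)) := by
            simp only [Finset.mem_insert, Finset.mem_singleton]
            push_neg
            exact ⟨h01, fun h => ha0 h.symm, fun h => hb0 h.symm⟩
          have h2 : z1 ∉ ({a, b} : Finset (Fin n)) := by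
            simp only [Finset.mem_insert, Finset.mem_singleton]
            push_neg
            exact ⟨fun h => ha1 h.symm, fun h => hb1 h.symm⟩
          have h3 : a ∉ ({b} : Finset (Fin n)) := by simpa using hab
          rw [Finset.card_insert_of_notMem h1, Finset.card_insert_of_notMem h2,
            Finset.card_insert_of_notMem h3, Finset.card_singleton]
        have hn5 : 5 ≤ n := by
          have := Finset.card_le_card
            (Finset.subset_univ ({z0, z1, a, b} : Finset (Fin n)))
          rw [hcard4, Finset.card_univ, Fintype.card_fin] at this
          omega
        have hcompl : (({z0, z1, a, b} : Finset (Fin n))ᶜ).Nonempty := by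
          rw [← Finset.card_pos, Finset.card_compl, hcard4, Fintype.card_fin]
          omega
        obtain ⟨e, he⟩ := hcompl
        rw [Finset.mem_compl, Finset.mem_insert, Finset.mem_insert,
          Finset.mem_insert, Finset.mem_singleton, not_or, not_or, not_or] at he
        obtain ⟨he0, he1, hea, heb⟩ := he
        have hsH : Equiv.swap a e ∈ H := by
          rw [memH]
          left
          exact ⟨Equiv.swap_apply_of_ne_of_ne (Ne.symm ha0) (Ne.symm he0),
            Equiv.swap_apply_of_ne_of_ne (Ne.symm ha1) (Ne.symm he1)⟩
        have hwK : g⁻¹ * Equiv.swap a e * g ∈ K :=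
          K.mul_mem (K.mul_mem (K.inv_mem hgK) (hHK hsH)) hgK
        have hweq : g⁻¹ * Equiv.swap a e * g = Equiv.swap (g⁻¹ a) (g⁻¹ e) := by
          rw [Equiv.swap_apply_apply, inv_inv]
        have hga : g⁻¹ a = z0 := by rw [ha]; simp
        refine ⟨g⁻¹ e, ?_, ?_, ?_⟩
        · intro h
          apply hea
          have : g (g⁻¹ e) = g z0 := by rw [h]
          simpa [← ha] using this
        · intro h
          apply heb
          have : g (g⁻¹ e) = g z1 := by rw [h]
          simpa [← hb] using this
        · rw [← hga]
          rw [← hweq]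
          exact hwK
    obtain ⟨c, hc0, hc1, hcK⟩ := hc
    -- key: all swaps with z0 / z1
    have key0 : ∀ t, t ≠ z0 → t ≠ z1 → Equiv.swap z0 t ∈ K := by
      intro t ht0 ht1
      have hsH : Equiv.swap c t ∈ H := by
        rw [memH]
        left
        exact ⟨Equiv.swap_apply_of_ne_of_ne (Ne.symm hc0) (Ne.symm ht0),
          Equiv.swap_apply_of_ne_of_ne (Ne.symm hc1) (Ne.symm ht1)⟩
      have : Equiv.swap (Equiv.swap c t z0) (Equiv.swap c t c)
          = Equiv.swap c t * Equiv.swap z0 c * (Equiv.swap c t)⁻¹ :=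
        Equiv.swap_apply_apply _ z0 c
      rw [Equiv.swap_apply_of_ne_of_ne (Ne.symm hc0) (Ne.symm ht0),
        Equiv.swap_apply_left] at this
      rw [this]
      exact K.mul_mem (K.mul_mem (hHK hsH) hcK) (K.inv_mem (hHK hsH))
    have key1 : ∀ t, t ≠ z0 → t ≠ z1 → Equiv.swap z1 t ∈ K := by
      intro t ht0 ht1
      have : Equiv.swap (τ z0) (τ t) = τ * Equiv.swap z0 t * τ⁻¹ :=
        Equiv.swap_apply_apply τ z0 t
      rw [hτ, Equiv.swap_apply_left, ← hτ,
        Equiv.swap_apply_of_ne_of_ne ht0 ht1] at this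
      rw [this]
      exact K.mul_mem (K.mul_mem (hHK hτH) (key0 t ht0 ht1)) (K.inv_mem (hHK hτH))
    -- conclude: K contains all transpositions
    rw [eq_top_iff, ← Equiv.Perm.closure_isSwap, Subgroup.closure_le]
    rintro σ ⟨x, y, hxy, rfl⟩
    by_cases hx0 : x = z0
    · subst hx0
      by_cases hy1 : y = z1
      · exact hy1 ▸ hHK hτH
      · exact key0 y (Ne.symm hxy) hy1
    by_cases hx1 : x = z1
    · subst hx1
      by_cases hy0 : y = z0
      · rw [hy0, Equiv.swap_comm]; exact hHK hτH
      · exact key1 y hy0 (Ne.symm hxy)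
    by_cases hy0 : y = z0
    · rw [Equiv.swap_comm]; exact hy0 ▸ key0 x hx0 hx1
    by_cases hy1 : y = z1
    · rw [Equiv.swap_comm]; exact hy1 ▸ key1 x hx0 hx1
    · apply hHK
      rw [memH]
      left
      exact ⟨Equiv.swap_apply_of_ne_of_ne (Ne.symm hx0) (Ne.symm hy0),
        Equiv.swap_apply_of_ne_of_ne (Ne.symm hx1) (Ne.symm hy1)⟩
end

section
/- For every even natural number n ≥ 4 and every fixed-point-free involution π ∈ Equiv.Perm (Fin n) (i.e., π ≠ 1, π² = 1 and π x ≠ x for all x), the centralizer of π in Equiv.Perm (Fin n) (which is isomorphic to the wreath product S_2 ≀ S_{n/2}) is a maximal proper subgroup of Equiv.Perm (Fin n), i.e., it is a coatom in the lattice of subgroups of Equiv.Perm (Fin n). -/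
/-- For even `n ≥ 4` and a fixed-point-free involution `π ∈ S_n`, the centralizer of
`π` in `S_n` (isomorphic to the wreath product `S_2 ≀ S_{n/2}`) is a maximal subgroup
of `S_n`, i.e. a coatom in the subgroup lattice. -/
theorem centralizer_fpf_involution_maximal (n : ℕ) (hn : 4 ≤ n) (heven : Even n)
    (π : Equiv.Perm (Fin n)) (hπ1 : π ≠ 1) (hπ2 : π ^ 2 = 1)
    (hfpf : ∀ x : Fin n, π x ≠ x) :
    IsCoatom (Subgroup.centralizer {π}) := by
  classical
  set C := Subgroup.centralizer ({π} : Set (Equiv.Perm (Fin n))) with hCdef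
  have hinv : ∀ x, π (π x) = x := by
    intro x
    have : (π ^ 2) x = (1 : Equiv.Perm (Fin n)) x := by rw [hπ2]
    simpa [sq, Equiv.Perm.mul_apply] using this
  have hne : ∀ {u v : Fin n}, u ≠ π v → π u ≠ v := by
    intro u v h h2
    exact h (by rw [← h2, hinv])
  have memC : ∀ g : Equiv.Perm (Fin n), g ∈ C ↔ ∀ x, g (π x) = π (g x) := by
    intro g
    rw [hCdef, Subgroup.mem_centralizer_singleton_iff, Equiv.ext_iff]
    constructor
    · intro h x; have := h x; simpa [Equiv.Perm.mul_apply] using this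
    · intro h x; have := h x; simpa [Equiv.Perm.mul_apply] using this
  -- the swap of a pair {x, πx} is in C
  have pairswap_mem : ∀ x : Fin n, Equiv.swap x (π x) ∈ C := by
    intro x
    rw [memC]
    intro y
    rcases eq_or_ne y x with rfl | h1
    · rw [Equiv.swap_apply_right, Equiv.swap_apply_left, hinv]
    rcases eq_or_ne y (π x) with rfl | h2
    · rw [hinv, Equiv.swap_apply_left, Equiv.swap_apply_right]
    · rw [Equiv.swap_apply_of_ne_of_ne (hne h2) (π.injective.ne h1),
        Equiv.swap_apply_of_ne_of_ne h1 h2]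
  -- the double swap is in C
  have dswap_mem : ∀ a b : Fin n, b ≠ a → b ≠ π a →
      Equiv.swap a b * Equiv.swap (π a) (π b) ∈ C := by
    intro a b hba hbpa
    have na : π a ≠ a := hfpf a
    have nb : π b ≠ b := hfpf b
    have hapb : a ≠ π b := by
      intro h
      have h' := congrArg π h
      rw [hinv] at h'
      exact hbpa h'.symm
    rw [memC]
    intro x
    simp only [Equiv.Perm.mul_apply]
    rcases eq_or_ne x a with rfl | hxa
    · rw [Equiv.swap_apply_left, Equiv.swap_apply_of_ne_of_ne (Ne.symm hapb) nb,
        Equiv.swap_apply_of_ne_of_ne na.symm hapb, Equiv.swap_apply_left]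
    rcases eq_or_ne x b with rfl | hxb
    · rw [Equiv.swap_apply_right, Equiv.swap_apply_of_ne_of_ne na hbpa.symm,
        Equiv.swap_apply_of_ne_of_ne hbpa nb.symm, Equiv.swap_apply_right]
    rcases eq_or_ne x (π a) with rfl | hxpa
    · rw [hinv, Equiv.swap_apply_of_ne_of_ne na.symm hapb, Equiv.swap_apply_left,
        Equiv.swap_apply_left, Equiv.swap_apply_of_ne_of_ne (Ne.symm hapb) nb, hinv]
    rcases eq_or_ne x (π b) with rfl | hxpb
    · rw [hinv, Equiv.swap_apply_of_ne_of_ne hbpa nb.symm, Equiv.swap_apply_right,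
        Equiv.swap_apply_right, Equiv.swap_apply_of_ne_of_ne na hbpa.symm, hinv]
    · rw [Equiv.swap_apply_of_ne_of_ne (π.injective.ne hxa) (π.injective.ne hxb),
        Equiv.swap_apply_of_ne_of_ne (hne hxpa) (hne hxpb),
        Equiv.swap_apply_of_ne_of_ne hxpa hxpb,
        Equiv.swap_apply_of_ne_of_ne hxa hxb]
  -- C acts transitively
  have move : ∀ a u : Fin n, ∃ c ∈ C, c a = u := by
    intro a u
    rcases eq_or_ne u a with rfl | hua
    · exact ⟨1, C.one_mem, rfl⟩
    rcases eq_or_ne u (π a) with rfl | hupa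
    · exact ⟨_, pairswap_mem a, Equiv.swap_apply_left a (π a)⟩
    · have hapu : a ≠ π u := by
        intro h
        have h' := congrArg π h
        rw [hinv] at h'
        exact hupa h'.symm
      refine ⟨_, dswap_mem a u hua hupa, ?_⟩
      simp only [Equiv.Perm.mul_apply]
      rw [Equiv.swap_apply_of_ne_of_ne (hfpf a).symm hapu, Equiv.swap_apply_left]
  -- C moves non-pairs to non-pairs, 2-transitively
  have move2 : ∀ a b u v : Fin n, b ≠ a → b ≠ π a → v ≠ u → v ≠ π u →
      ∃ c ∈ C, c a = u ∧ c b = v := by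
    intro a b u v hba hbpa hvu hvpu
    obtain ⟨c1, hc1, hc1a⟩ := move a u
    have hc1' := (memC c1).1 hc1
    have hb'u : c1 b ≠ u := by
      rw [← hc1a]; exact c1.injective.ne hba
    have hb'pu : c1 b ≠ π u := by
      rw [← hc1a, ← hc1' a]
      exact c1.injective.ne hbpa
    rcases eq_or_ne v (c1 b) with rfl | hvb'
    · exact ⟨c1, hc1, hc1a, rfl⟩
    rcases eq_or_ne v (π (c1 b)) with rfl | hvpb'
    · refine ⟨Equiv.swap (c1 b) (π (c1 b)) * c1, C.mul_mem (pairswap_mem (c1 b)) hc1, ?_, ?_⟩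
      · simp only [Equiv.Perm.mul_apply]
        rw [hc1a, Equiv.swap_apply_of_ne_of_ne hb'u.symm (hne hb'pu).symm]
      · simp only [Equiv.Perm.mul_apply]
        rw [Equiv.swap_apply_left]
    · refine ⟨(Equiv.swap (c1 b) v * Equiv.swap (π (c1 b)) (π v)) * c1,
        C.mul_mem (dswap_mem (c1 b) v hvb' hvpb') hc1, ?_, ?_⟩
      · simp only [Equiv.Perm.mul_apply]
        rw [hc1a, Equiv.swap_apply_of_ne_of_ne (hne hb'pu).symm (hne hvpu).symm,
          Equiv.swap_apply_of_ne_of_ne hb'u.symm hvu.symm]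
      · simp only [Equiv.Perm.mul_apply]
        rw [Equiv.swap_apply_of_ne_of_ne (hfpf (c1 b)).symm (hne hvpb').symm,
          Equiv.swap_apply_left]
  constructor
  · -- C ≠ ⊤
    intro htop
    have x0 : Fin n := ⟨0, by omega⟩
    obtain ⟨z, hz1, hz2⟩ : ∃ z : Fin n, z ≠ x0 ∧ z ≠ π x0 := by
      by_contra h
      push_neg at h
      have hsub : (Finset.univ : Finset (Fin n)) ⊆ {x0, π x0} := by
        intro z _
        simp only [Finset.mem_insert, Finset.mem_singleton]
        rcases eq_or_ne z x0 with rfl | hz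
        · exact Or.inl rfl
        · exact Or.inr (h z hz)
      have hcard := Finset.card_le_card hsub
      rw [Finset.card_univ, Fintype.card_fin] at hcard
      have h2 : ({x0, π x0} : Finset (Fin n)).card ≤ 2 :=
        (Finset.card_insert_le _ _).trans (by simp)
      omega
    have hg : Equiv.swap (π x0) z ∈ C := htop ▸ Subgroup.mem_top _
    have := (memC _).1 hg x0
    rw [Equiv.swap_apply_left,
      Equiv.swap_apply_of_ne_of_ne (hfpf x0).symm hz1.symm] at this
    exact hz2 this
  · -- maximality
    intro K hK
    obtain ⟨g, hgK, hgC⟩ := SetLike.exists_of_lt hK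
    have hnc : ¬ ∀ x, g (π x) = π (g x) := fun h => hgC ((memC g).2 h)
    push_neg at hnc
    obtain ⟨y, hy⟩ := hnc
    have hba : g (π y) ≠ g y := fun h => hfpf y (g.injective h)
    have hbpa : g (π y) ≠ π (g y) := hy
    have hswab : Equiv.swap (g y) (g (π y)) ∈ K := by
      rw [Equiv.swap_apply_apply]
      exact K.mul_mem (K.mul_mem hgK (hK.le (pairswap_mem y))) (K.inv_mem hgK)
    have hallswap : ∀ s : Equiv.Perm (Fin n), s.IsSwap → s ∈ K := by
      rintro s ⟨u, v, huv, rfl⟩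
      rcases eq_or_ne v (π u) with rfl | hvpu
      · exact hK.le (pairswap_mem u)
      · obtain ⟨c, hcC, hca, hcb⟩ := move2 (g y) (g (π y)) u v hba hbpa (Ne.symm huv) hvpu
        have hrepr : Equiv.swap u v = c * Equiv.swap (g y) (g (π y)) * c⁻¹ := by
          rw [← hca, ← hcb]
          exact Equiv.swap_apply_apply c _ _
        rw [hrepr]
        exact K.mul_mem (K.mul_mem (hK.le hcC) hswab) (K.inv_mem (hK.le hcC))
    have hcl := Equiv.Perm.closure_isSwap (α := Fin n)
    rw [eq_top_iff, ← hcl, Subgroup.closure_le]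
    intro s hs
    exact hallswap s hs
end

section
/- The conjugation action of the alternating group alternatingGroup (Fin 8) on the set of fixed-point-free involutions of Fin 8 (all of which are even permutations, forming a single conjugacy class of the alternating group of size 105) is not primitive: there exists an invariant equivalence relation on this class other than equality and the full relation. -/
/-!
Identify `Fin 8` with `𝔽₂³` through binary digits, so that the translations `x ↦ x ^^^ v`
form a regular elementary abelian subgroup `T` whose nontrivial elements are fixed-point-free
involutions. All fixed-point-free involutions are conjugate to `t₁ = translation 1`, already
in `A₈` because the odd permutation `swap 0 1` commutes with `t₁`. A permutation commuting
with `t₁` preserves the four pairs `{2i, 2i+1}`, hence lies in the wreath product `S₂ ≀ S₄`,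
and a finite check over this wreath product shows that its even elements normalize `T`. So
the stabilizer of `t₁` in `A₈` lies in `N(T)`, and the `N(T)`-orbit of `t₁` is a block. It
contains `translation 2`, while each of its translates consists of pairwise commuting
involutions, so it is neither a singleton nor everything.
-/

open Equiv Equiv.Perm MulAction Pointwise

namespace MulAction

variable (G : Type*) {X : Type*} [Group G] [MulAction G X]

def InSameTranslate (B : Set X) (x y : X) : Prop := ∃ g : G, x ∈ g • B ∧ y ∈ g • B

variable {G} {B : Set X} {x y z : X}

theorem InSameTranslate.symm (h : InSameTranslate G B x y) : InSameTranslate G B y x :=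
  let ⟨g, hx, hy⟩ := h; ⟨g, hy, hx⟩

theorem IsBlock.inSameTranslate_trans (hB : IsBlock G B) (hxy : InSameTranslate G B x y)
    (hyz : InSameTranslate G B y z) : InSameTranslate G B x z := by
  obtain ⟨g, hx, hy⟩ := hxy
  obtain ⟨g', hy', hz⟩ := hyz
  have : g • B = g' • B := isBlock_iff_smul_eq_smul_of_nonempty.mp hB ⟨y, hy, hy'⟩
  exact ⟨g, hx, this ▸ hz⟩

theorem InSameTranslate.smul (h : InSameTranslate G B x y) (g : G) :
    InSameTranslate G B (g • x) (g • y) := by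
  obtain ⟨g', hx, hy⟩ := h
  exact ⟨g * g', mul_smul g g' B ▸ Set.smul_mem_smul_set hx,
    mul_smul g g' B ▸ Set.smul_mem_smul_set hy⟩

theorem InSameTranslate.of_mem (hx : x ∈ B) (hy : y ∈ B) : InSameTranslate G B x y :=
  ⟨1, by rwa [one_smul], by rwa [one_smul]⟩

theorem inSameTranslate_self_of_mem_orbit {a : X} (ha : a ∈ B) (hx : x ∈ orbit G a) :
    InSameTranslate G B x x := by
  obtain ⟨g, rfl⟩ := hx
  exact (InSameTranslate.of_mem ha ha).smul g

end MulAction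

namespace Equiv.Perm

variable {β : Type*}

theorem fst_apply_eq_of_commute {e : Perm (β × Fin 2)}
    (h : Commute e (prodCongrRight fun _ => swap 0 1)) (i : β) (a b : Fin 2) :
    (e (i, a)).1 = (e (i, b)).1 := by
  have hflip : ∀ i, (e (i, 1)).1 = (e (i, 0)).1 := fun i => by
    simpa using congrArg Prod.fst (DFunLike.congr_fun h.eq (i, 0))
  fin_cases a <;> fin_cases b <;> simp [hflip]

theorem exists_eq_prodShear_of_commute {d : Perm (β × Fin 2)}
    (h : Commute d (prodCongrRight fun _ => swap 0 1)) :
    ∃ (π : Perm β) (τ : β → Perm (Fin 2)), d = prodShear π τ := by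
  have hd := fst_apply_eq_of_commute h
  have hd' := fst_apply_eq_of_commute h.inv_left
  let π : Perm β :=
    { toFun i := (d (i, 0)).1
      invFun j := (d⁻¹ (j, 0)).1
      left_inv i := by dsimp only; rw [hd' _ 0 (d (i, 0)).2]; simp
      right_inv j := by dsimp only; rw [hd _ 0 (d⁻¹ (j, 0)).2]; simp }
  refine ⟨π, fun i => swap 0 (d (i, 0)).2, Equiv.ext fun ⟨i, a⟩ => Prod.ext (hd i a 0) ?_⟩
  have hflip : (d (i, 1)).2 = swap 0 1 (d (i, 0)).2 := by
    simpa using congrArg Prod.snd (DFunLike.congr_fun h.eq (i, 0))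
  have swap_zero : ∀ δ : Fin 2, swap 0 δ 1 = swap 0 1 δ := by decide
  fin_cases a
  · simp
  · simp [hflip, swap_zero]

theorem sign_prodShear {γ : Type*} [Fintype β] [DecidableEq β] [Fintype γ] [DecidableEq γ]
    (π : Perm β) (τ : β → Perm γ) :
    sign (prodShear π τ) = sign π ^ Fintype.card γ * ∏ i, sign (τ i) := by
  have : prodShear π τ = prodCongrLeft (fun _ => π) * prodCongrRight τ := rfl
  rw [this, map_mul, sign_prodCongrLeft, sign_prodCongrRight, Finset.prod_const, Finset.card_univ]

variable {α : Type*} [Fintype α] [DecidableEq α]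

theorem cycleType_eq_replicate_of_sq_eq_one {σ : Perm α} (hσ : σ ^ 2 = 1)
    (hfree : ∀ x, σ x ≠ x) : σ.cycleType = Multiset.replicate (Fintype.card α / 2) 2 := by
  have hrep := cycleType_of_pow_prime_eq_one hσ
  have hsupp : σ.support = Finset.univ := Finset.eq_univ_of_forall
    fun x => mem_support.mpr (hfree x)
  have hsum := σ.sum_cycleType
  rw [hsupp, Finset.card_univ, hrep, Multiset.sum_replicate, smul_eq_mul] at hsum
  rw [hrep, ← hsum, Nat.mul_div_cancel _ two_pos]

theorem isConj_of_sq_eq_one {σ τ : Perm α} (hσ : σ ^ 2 = 1) (hτ : τ ^ 2 = 1)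
    (hσfree : ∀ x, σ x ≠ x) (hτfree : ∀ x, τ x ≠ x) : IsConj σ τ :=
  isConj_iff_cycleType_eq.mpr <| by
    rw [cycleType_eq_replicate_of_sq_eq_one hσ hσfree,
      cycleType_eq_replicate_of_sq_eq_one hτ hτfree]

theorem exists_mem_alternatingGroup_conj_eq {σ τ : Perm α} (hστ : IsConj σ τ) {s : Perm α}
    (hs : sign s = -1) (hsσ : Commute s σ) :
    ∃ g ∈ alternatingGroup α, g * σ * g⁻¹ = τ := by
  obtain ⟨g, hg⟩ := isConj_iff.mp hστ
  rcases Int.units_eq_one_or (sign g) with hg1 | hg1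
  · exact ⟨g, hg1, hg⟩
  · refine ⟨g * s, by simp [mem_alternatingGroup, hg1, hs], ?_⟩
    rw [← hg, mul_inv_rev, mul_assoc g, hsσ.eq]
    group

end Equiv.Perm

def alternatingGroupConjAct (α : Type*) [Fintype α] [DecidableEq α] :
    Subgroup (ConjAct (Perm α)) :=
  (alternatingGroup α).comap ConjAct.ofConjAct.toMonoidHom

namespace Fin8

def translation (v : Fin 8) : Perm (Fin 8) :=
  Function.Involutive.toPerm (· ^^^ v) fun x => by
    dsimp only
    rw [Fin.xor_assoc (n := 3) rfl, Fin.xor_self, Fin.xor_zero]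

theorem translation_commute (v w : Fin 8) : Commute (translation v) (translation w) :=
  Equiv.ext fun x => by
    change x ^^^ w ^^^ v = x ^^^ v ^^^ w
    rw [Fin.xor_assoc (n := 3) rfl, Fin.xor_comm w, ← Fin.xor_assoc (n := 3) rfl]

def pairing : Fin 4 × Fin 2 ≃ Fin 8 := finProdFinEquiv

theorem translation_one_eq :
    pairing.symm.permCongr (translation 1) = prodCongrRight fun _ => swap 0 1 := by
  decide

theorem prodShear_mul_translation : ∀ (π : Perm (Fin 4)) (τ : Fin 4 → Perm (Fin 2)),
    ∏ i, sign (τ i) = 1 → ∀ u, ∃ w,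
      pairing.permCongr (prodShear π τ) * translation u =
        translation w * pairing.permCongr (prodShear π τ) := by
  decide

theorem mem_normalizer_of_forall_mul_translation {c : Perm (Fin 8)}
    (h : ∀ u, ∃ w, c * translation u = translation w * c) :
    c ∈ Subgroup.normalizer (Set.range translation) := by
  refine Subgroup.mem_normalizer_fintype ?_
  rintro _ ⟨u, rfl⟩
  obtain ⟨w, hw⟩ := h u
  exact ⟨w, by rw [hw, mul_inv_cancel_right]⟩

theorem mem_normalizer_of_commute_translation_one {c : Perm (Fin 8)}
    (hc : c ∈ alternatingGroup (Fin 8)) (h : Commute c (translation 1)) :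
    c ∈ Subgroup.normalizer (Set.range translation) := by
  obtain ⟨π, τ, hπτ⟩ := exists_eq_prodShear_of_commute
    (translation_one_eq ▸ h.map (permCongrHom pairing.symm))
  have hc' : c = pairing.permCongr (prodShear π τ) := by
    rw [← hπτ]
    ext x
    simp
  have hsign : ∏ i, sign (τ i) = 1 := by
    rw [← mem_alternatingGroup.mp hc, hc', sign_permCongr, sign_prodShear, Fintype.card_fin,
      Int.units_sq, one_mul]
  rw [hc']
  exact mem_normalizer_of_forall_mul_translation (prodShear_mul_translation π τ hsign)

/-- The normalizer `AGL₃(𝔽₂)` of the translations, inside `A₈` acting by conjugation. -/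
def affineGroup : Subgroup (alternatingGroupConjAct (Fin 8)) :=
  (Subgroup.normalizer (Set.range translation)).comap
    (ConjAct.ofConjAct.toMonoidHom.comp (alternatingGroupConjAct (Fin 8)).subtype)

theorem stabilizer_le_affineGroup :
    stabilizer (alternatingGroupConjAct (Fin 8)) (translation 1) ≤ affineGroup := by
  intro k hk
  rw [mem_stabilizer_iff, Subgroup.smul_def, ConjAct.smul_def, mul_inv_eq_iff_eq_mul] at hk
  exact mem_normalizer_of_commute_translation_one k.2 hk

theorem orbit_affineGroup_subset_range_translation :
    orbit affineGroup (translation 1) ⊆ Set.range translation := by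
  rintro _ ⟨h, rfl⟩
  exact (Subgroup.mem_set_normalizer_iff.mp (Subgroup.mem_comap.mp h.2) _).mp ⟨1, rfl⟩

theorem commute_of_mem_smul_orbit_affineGroup {k : alternatingGroupConjAct (Fin 8)}
    {x y : Perm (Fin 8)} (hx : x ∈ k • orbit affineGroup (translation 1))
    (hy : y ∈ k • orbit affineGroup (translation 1)) : Commute x y := by
  have hT := Set.smul_set_mono (a := k) orbit_affineGroup_subset_range_translation
  obtain ⟨x, ⟨v, rfl⟩, rfl⟩ := hT hx
  obtain ⟨y, ⟨w, rfl⟩, rfl⟩ := hT hy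
  exact (translation_commute v w).map (MulAut.conj (ConjAct.ofConjAct (k : ConjAct (Perm (Fin 8)))))

theorem translation_two_mem_orbit_affineGroup :
    translation 2 ∈ orbit affineGroup (translation 1) := by
  let σ : Perm (Fin 8) := swap 1 2 * swap 5 6
  have hσ : ConjAct.toConjAct σ ∈ alternatingGroupConjAct (Fin 8) := by
    change σ ∈ alternatingGroup (Fin 8)
    rw [mem_alternatingGroup]
    decide
  have hσN : σ ∈ Subgroup.normalizer (Set.range translation) :=
    mem_normalizer_of_forall_mul_translation (by decide)
  refine ⟨⟨⟨ConjAct.toConjAct σ, hσ⟩, Subgroup.mem_comap.mpr hσN⟩, ?_⟩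
  change σ * translation 1 * σ⁻¹ = translation 2
  decide

end Fin8

open Fin8

/-- The conjugation action of the alternating group `A_8` on the set of
fixed-point-free involutions of `Fin 8` (a single conjugacy class of `A_8`, of size
105) is not primitive: there is an `A_8`-invariant equivalence relation on this
class other than equality and the full relation. -/
theorem imprimitive_fpf_involutions_A8 :
    let C : Set (Equiv.Perm (Fin 8)) :=
      {σ | σ ≠ 1 ∧ σ ^ 2 = 1 ∧ ∀ x : Fin 8, σ x ≠ x}
    ∃ r : Equiv.Perm (Fin 8) → Equiv.Perm (Fin 8) → Prop,
      (∀ x ∈ C, r x x) ∧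
      (∀ x ∈ C, ∀ y ∈ C, r x y → r y x) ∧
      (∀ x ∈ C, ∀ y ∈ C, ∀ z ∈ C, r x y → r y z → r x z) ∧
      (∀ g ∈ alternatingGroup (Fin 8), ∀ x ∈ C, ∀ y ∈ C,
        r x y → r (g * x * g⁻¹) (g * y * g⁻¹)) ∧
      ¬ (∀ x ∈ C, ∀ y ∈ C, (r x y ↔ x = y)) ∧
      ¬ (∀ x ∈ C, ∀ y ∈ C, r x y) := by
  intro C
  let B := orbit affineGroup (translation 1)
  have hB : IsBlock (alternatingGroupConjAct (Fin 8)) B :=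
    IsBlock.of_orbit stabilizer_le_affineGroup
  have ht₁ : translation 1 ∈ C := by decide
  have hC : ∀ x ∈ C, x ∈ orbit (alternatingGroupConjAct (Fin 8)) (translation 1) := by
    rintro x ⟨-, hx, hxfree⟩
    obtain ⟨g, hg, rfl⟩ := exists_mem_alternatingGroup_conj_eq
      (isConj_of_sq_eq_one ht₁.2.1 hx ht₁.2.2 hxfree) (s := swap 0 1) (by decide)
      (by decide : swap 0 1 * translation 1 = translation 1 * swap 0 1)
    exact ⟨⟨ConjAct.toConjAct g, hg⟩, rfl⟩
  refine ⟨InSameTranslate (alternatingGroupConjAct (Fin 8)) B,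
    fun x hx => inSameTranslate_self_of_mem_orbit (mem_orbit_self _) (hC x hx),
    fun _ _ _ _ => InSameTranslate.symm, fun _ _ _ _ _ _ => hB.inSameTranslate_trans,
    fun g hg _ _ _ _ hxy => hxy.smul ⟨ConjAct.toConjAct g, hg⟩, fun h => ?_, fun h => ?_⟩
  · have ht₂ : translation 2 ∈ C := by decide
    have h₁₂ := (h _ ht₁ _ ht₂).mp
      (.of_mem (mem_orbit_self _) translation_two_mem_orbit_affineGroup)
    exact absurd h₁₂ (by decide)
  · let y : Perm (Fin 8) := swap 0 2 * swap 1 4 * swap 3 5 * swap 6 7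
    have hy : y ∈ C := by decide
    obtain ⟨k, hx, hy⟩ := h _ ht₁ y hy
    exact absurd (commute_of_mem_smul_orbit_affineGroup hx hy).eq (by decide)
end
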